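/- arXiv:1810.02963 — 7 statements merged into one kernel-verified Lean document; each statement's English description precedes it below -/
import Mathlib

section
/- Let G be a finite simple graph and let V(G) = V_1 ∪ V_2 ∪ ⋯ ∪ V_r be a partition of its vertex set into r ≥ 2 parts. Then lbox(G) ≤ (r − 1) · max over all pairs 1 ≤ i < j ≤ r of lbox(G[V_i ∪ V_j]), where G[V_i ∪ V_j] is the subgraph of G induced on V_i ∪ V_j. -/
/-!
Extend each interval graph in a representation of `G[V_i ∪ V_j]` to all of `V` by giving the
vertices outside `V_i ∪ V_j` an interval that meets all the others, so that they are universal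
there. Any two vertices lie in a common `V_i ∪ V_j`, so the extended graphs of all pairs
`i < j` intersect to `G`; a vertex of `V_a` is non-universal only in graphs coming from the
`r - 1` pairs containing `a`, and in at most `M` of those for each pair.
-/

open Classical

/-- A finite simple graph is an interval graph if each vertex can be assigned a
closed real interval so that distinct vertices are adjacent iff their intervals
intersect. -/
def IsIntervalGraph {V : Type} (I : SimpleGraph V) : Prop :=
  ∃ l r : V → ℝ, ∀ u v : V, u ≠ v →
    (I.Adj u v ↔ (Set.Icc (l u) (r u) ∩ Set.Icc (l v) (r v)).Nonempty)

/-- A vertex is universal if it is adjacent to every other vertex. -/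
def IsUniversal {V : Type} (I : SimpleGraph V) (v : V) : Prop :=
  ∀ u : V, u ≠ v → I.Adj v u

/-- `G` has a local box representation where every vertex is non-universal in at
most `t` of the interval graphs. -/
def LocalBoxRep {V : Type} (G : SimpleGraph V) (t : ℕ) : Prop :=
  ∃ (k : ℕ) (I : Fin k → SimpleGraph V),
    (∀ i, IsIntervalGraph (I i)) ∧
    (∀ u v : V, u ≠ v → (G.Adj u v ↔ ∀ i, (I i).Adj u v)) ∧
    (∀ v : V, {i : Fin k | ¬ IsUniversal (I i) v}.ncard ≤ t)

/-- Local boxicity of a graph. -/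
noncomputable def lbox {V : Type} (G : SimpleGraph V) : ℕ :=
  sInf {t : ℕ | LocalBoxRep G t}

/-- Iterated base-2 logarithm: the number of times `logb 2` must be applied
before the result becomes at most 1. -/
noncomputable def logStar (x : ℝ) : ℕ :=
  sInf {n : ℕ | (Real.logb 2)^[n] x ≤ 1}

/-- A graph is claw-free if it has no induced `K_{1,3}`. -/
def ClawFree {V : Type} (G : SimpleGraph V) : Prop :=
  ∀ v a b c : V, a ≠ b → a ≠ c → b ≠ c →
    ¬ (G.Adj v a ∧ G.Adj v b ∧ G.Adj v c ∧ ¬ G.Adj a b ∧ ¬ G.Adj a c ∧ ¬ G.Adj b c)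

/-- Comparability graph of a poset. -/
def compGraph (α : Type) [PartialOrder α] : SimpleGraph α where
  Adj x y := x ≠ y ∧ (x ≤ y ∨ y ≤ x)
  symm := by
    constructor
    intro x y h
    exact ⟨h.1.symm, h.2.symm⟩
  loopless := by
    constructor
    intro x h
    exact h.1 rfl

/-- A partial linear extension of a poset, given as a duplicate-free list
(ordered by position) which extends the partial order on its elements. -/
def IsPLE {α : Type} [PartialOrder α] [DecidableEq α] (L : List α) : Prop :=
  L.Nodup ∧ ∀ x ∈ L, ∀ y ∈ L, x ≤ y → L.idxOf x ≤ L.idxOf y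

/-- `x` appears below `y` in the list `L`. -/
def Below {α : Type} [DecidableEq α] (L : List α) (x y : α) : Prop :=
  x ∈ L ∧ y ∈ L ∧ L.idxOf x < L.idxOf y

/-- A local realizer of a poset: a family of ple's such that every strict
relation is witnessed, and every incomparable pair is reversed twice. -/
def IsLocalRealizer {α : Type} [PartialOrder α] [DecidableEq α] {k : ℕ}
    (L : Fin k → List α) : Prop :=
  (∀ i, IsPLE (L i)) ∧
  (∀ x y : α, x < y → ∃ i, Below (L i) x y) ∧
  (∀ x y : α, ¬ x ≤ y → ¬ y ≤ x →
    (∃ i, Below (L i) x y) ∧ (∃ i, Below (L i) y x))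

/-- Local dimension of a poset: the least `t` such that some local realizer has
every element in at most `t` ple's. -/
noncomputable def ldim (α : Type) [PartialOrder α] [DecidableEq α] : ℕ :=
  sInf {t : ℕ | ∃ (k : ℕ) (L : Fin k → List α), IsLocalRealizer L ∧
    ∀ x : α, {i : Fin k | x ∈ L i}.ncard ≤ t}

/-- Product dimension of a graph. -/
noncomputable def prodDim {V : Type} (G : SimpleGraph V) : ℕ :=
  sInf {k : ℕ | 0 < k ∧ ∃ f : V → Fin k → ℕ,
    ∀ u v : V, u ≠ v → (G.Adj u v ↔ ∀ i, f u i ≠ f v i)}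

/-- A poset has height at most 2: every chain has at most 2 elements. -/
def HeightAtMostTwo (α : Type) [Preorder α] : Prop :=
  ∀ x y z : α, x ≤ y → y ≤ z → x = y ∨ y = z

open Set

theorem Set.Icc_inter_Icc_nonempty_iff {α : Type*} [LinearOrder α] {a b c d : α} :
    (Icc a b ∩ Icc c d).Nonempty ↔ a ≤ b ∧ c ≤ d ∧ a ≤ d ∧ c ≤ b := by
  rw [Icc_inter_Icc, nonempty_Icc, sup_le_iff, le_inf_iff, le_inf_iff]
  tauto

def intervalGraph {V : Type} (l r : V → ℝ) : SimpleGraph V where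
  Adj u v := u ≠ v ∧ (Icc (l u) (r u) ∩ Icc (l v) (r v)).Nonempty
  symm := ⟨fun _ _ h => ⟨h.1.symm, by rw [Set.inter_comm]; exact h.2⟩⟩
  loopless := ⟨fun _ h => h.1 rfl⟩

theorem isIntervalGraph_intervalGraph {V : Type} (l r : V → ℝ) :
    IsIntervalGraph (intervalGraph l r) :=
  ⟨l, r, fun _ _ huv => and_iff_right huv⟩

/-- Empty intervals can be moved to pairwise distinct points beyond all other intervals. -/
theorem IsIntervalGraph.exists_rep_le {V : Type} [Finite V] {I : SimpleGraph V}
    (hI : IsIntervalGraph I) :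
    ∃ l r : V → ℝ, (∀ v, l v ≤ r v) ∧ ∀ u v : V, u ≠ v →
      (I.Adj u v ↔ (Icc (l u) (r u) ∩ Icc (l v) (r v)).Nonempty) := by
  obtain ⟨l, r, hI⟩ := hI
  obtain ⟨C, hC⟩ := (finite_range r).bddAbove
  obtain ⟨n, ⟨e⟩⟩ := Finite.exists_equiv_fin V
  let p : V → ℝ := fun v => C + 1 + (e v : ℕ)
  have hp : ∀ u v, p u = p v → u = v := fun u v h => e.injective (Fin.ext (by simpa [p] using h))
  refine ⟨fun v => if l v ≤ r v then l v else p v, fun v => if l v ≤ r v then r v else p v,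
    fun v => by dsimp only; split_ifs <;> simp_all, fun u v huv => ?_⟩
  have hu := hC (mem_range_self u)
  have hv := hC (mem_range_self v)
  have hpu : C + 1 ≤ p u := by simp [p]
  have hpv : C + 1 ≤ p v := by simp [p]
  have hpuv := mt (hp u v) huv
  rw [hI u v huv, Icc_inter_Icc_nonempty_iff, Icc_inter_Icc_nonempty_iff]
  dsimp only
  split_ifs <;> constructor <;> intro h <;>
    first | tauto | (exfalso; linarith) | exact absurd (le_antisymm h.2.2.1 h.2.2.2) hpuv

theorem intervalGraph_adj_iff_of_separate {V : Type} {u v x y : V} (huv : u ≠ v) (hxy : x ≠ y) :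
    (intervalGraph (fun w => if w = v then (1 : ℝ) else 0) (fun w => if w = u then 0 else 1)).Adj
      x y ↔ ¬ (x = u ∧ y = v ∨ x = v ∧ y = u) := by
  simp only [intervalGraph, Icc_inter_Icc_nonempty_iff, ne_eq, hxy, not_false_eq_true, true_and]
  split_ifs <;> grind

def extendUniversal {V : Type} (S : Set V) (I : SimpleGraph S) : SimpleGraph V where
  Adj u v := u ≠ v ∧ ∀ (hu : u ∈ S) (hv : v ∈ S), I.Adj ⟨u, hu⟩ ⟨v, hv⟩
  symm := ⟨fun _ _ h => ⟨h.1.symm, fun hv hu => (h.2 hu hv).symm⟩⟩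
  loopless := ⟨fun _ h => h.1 rfl⟩

section extendUniversal

variable {V : Type} {S : Set V} {I : SimpleGraph S}

theorem extendUniversal_adj_iff {u v : V} (hu : u ∈ S) (hv : v ∈ S) :
    (extendUniversal S I).Adj u v ↔ I.Adj ⟨u, hu⟩ ⟨v, hv⟩ :=
  ⟨fun h => h.2 hu hv, fun h => ⟨fun huv => h.ne (Subtype.ext huv), fun _ _ => h⟩⟩

theorem isUniversal_extendUniversal_of_notMem {v : V} (hv : v ∉ S) :
    IsUniversal (extendUniversal S I) v :=
  fun _ hu => ⟨hu.symm, fun hv' => absurd hv' hv⟩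

theorem isUniversal_extendUniversal_iff {v : V} (hv : v ∈ S) :
    IsUniversal (extendUniversal S I) v ↔ IsUniversal I ⟨v, hv⟩ := by
  refine ⟨fun h w hw => (extendUniversal_adj_iff hv w.2).1 (h w fun h' => hw (Subtype.ext h')),
    fun h w hw => ?_⟩
  by_cases hw' : w ∈ S
  · exact (extendUniversal_adj_iff hv hw').2 (h ⟨w, hw'⟩ fun h' => hw (congrArg Subtype.val h'))
  · exact (isUniversal_extendUniversal_of_notMem hw' v hw.symm).symm

theorem IsIntervalGraph.extendUniversal [Finite V] (hI : IsIntervalGraph I) :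
    IsIntervalGraph (extendUniversal S I) := by
  obtain ⟨l, r, hle, hI⟩ := hI.exists_rep_le
  obtain ⟨B, hB⟩ := (finite_range l).bddBelow
  obtain ⟨C, hC⟩ := (finite_range r).bddAbove
  have hminB := min_le_left B C
  have hminC := min_le_right B C
  have hbounds : ∀ s : S, B ≤ l s ∧ l s ≤ r s ∧ r s ≤ C :=
    fun s => ⟨hB (mem_range_self s), hle s, hC (mem_range_self s)⟩
  refine ⟨fun v => if hv : v ∈ S then l ⟨v, hv⟩ else min B C,
    fun v => if hv : v ∈ S then r ⟨v, hv⟩ else C, fun u v huv => ?_⟩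
  rw [Icc_inter_Icc_nonempty_iff]
  by_cases hu : u ∈ S <;> by_cases hv : v ∈ S
  · rw [extendUniversal_adj_iff hu hv, hI _ _ (by simpa using huv), Icc_inter_Icc_nonempty_iff]
    simp only [hu, hv, dite_true]
  · have := hbounds ⟨u, hu⟩
    simp only [hu, hv, dite_true, dite_false,
      iff_true_intro (isUniversal_extendUniversal_of_notMem hv u huv).symm, true_iff]
    refine ⟨?_, ?_, ?_, ?_⟩ <;> linarith
  · have := hbounds ⟨v, hv⟩
    simp only [hu, hv, dite_true, dite_false,
      iff_true_intro (isUniversal_extendUniversal_of_notMem hu v huv.symm), true_iff]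
    refine ⟨?_, ?_, ?_, ?_⟩ <;> linarith
  · simp only [hu, hv, dite_false,
      iff_true_intro (isUniversal_extendUniversal_of_notMem hu v huv.symm), true_iff]
    exact ⟨hminC, hminC, hminC, hminC⟩

end extendUniversal

theorem Set.ncard_sigma_le {ι : Type*} [Fintype ι] {κ : ι → Type*} [∀ i, Fintype (κ i)]
    (A : Set (Σ i, κ i)) (Q : Set ι) {t : ℕ} (hA : ∀ p ∈ A, p.1 ∈ Q)
    (hfib : ∀ i ∈ Q, {s | (⟨i, s⟩ : Σ i, κ i) ∈ A}.ncard ≤ t) :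
    A.ncard ≤ Q.ncard * t := by
  classical
  calc A.ncard ≤ (Q.toFinset.sigma fun i => {s | (⟨i, s⟩ : Σ i, κ i) ∈ A}.toFinset).card := by
        rw [ncard_eq_toFinset_card']
        exact Finset.card_le_card fun p hp => by
          rw [mem_toFinset] at hp; simpa using ⟨hA p hp, hp⟩
    _ = ∑ i ∈ Q.toFinset, {s | (⟨i, s⟩ : Σ i, κ i) ∈ A}.ncard := by
        simp [Finset.card_sigma, ncard_eq_toFinset_card']
    _ ≤ ∑ _i ∈ Q.toFinset, t := Finset.sum_le_sum fun i hi => hfib i (by simpa using hi)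
    _ = Q.ncard * t := by simp [ncard_eq_toFinset_card']

section LocalBoxRep

variable {V : Type} {G : SimpleGraph V}

theorem LocalBoxRep.mono {t t' : ℕ} (h : LocalBoxRep G t) (ht : t ≤ t') : LocalBoxRep G t' :=
  let ⟨k, I, hI, hG, hcount⟩ := h
  ⟨k, I, hI, hG, fun v => (hcount v).trans ht⟩

theorem LocalBoxRep.of_finite {ι : Type} [Finite ι] {t : ℕ} (I : ι → SimpleGraph V)
    (hI : ∀ i, IsIntervalGraph (I i)) (hG : ∀ u v, u ≠ v → (G.Adj u v ↔ ∀ i, (I i).Adj u v))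
    (hcount : ∀ v, {i | ¬ IsUniversal (I i) v}.ncard ≤ t) : LocalBoxRep G t := by
  have := Fintype.ofFinite ι
  let e := (Fintype.equivFin ι).symm
  exact ⟨_, I ∘ e, fun i => hI _, fun u v huv => (hG u v huv).trans e.forall_congr_right.symm,
    fun v => (ncard_preimage_of_injective_subset_range e.injective (by simp)).trans_le
      (hcount v)⟩

/-- One interval graph per non-edge `uv`: `u ↦ [0, 0]`, `v ↦ [1, 1]`, any other vertex
`↦ [0, 1]`. -/
theorem exists_localBoxRep [Finite V] (G : SimpleGraph V) : ∃ t, LocalBoxRep G t := by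
  let ι := {p : V × V // p.1 ≠ p.2 ∧ ¬ G.Adj p.1 p.2}
  refine ⟨Nat.card ι, LocalBoxRep.of_finite (fun p : ι =>
    intervalGraph (fun w => if w = p.1.2 then 1 else 0) (fun w => if w = p.1.1 then 0 else 1))
    (fun _ => isIntervalGraph_intervalGraph _ _) (fun x y hxy => ?_) fun _ => ncard_le_card _⟩
  refine ⟨fun hG p => (intervalGraph_adj_iff_of_separate p.2.1 hxy).2 ?_, fun h => ?_⟩
  · rintro (⟨rfl, rfl⟩ | ⟨rfl, rfl⟩)
    exacts [p.2.2 hG, p.2.2 hG.symm]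
  · by_contra hG
    exact (intervalGraph_adj_iff_of_separate hxy hxy).1 (h ⟨(x, y), hxy, hG⟩) (.inl ⟨rfl, rfl⟩)

theorem localBoxRep_lbox [Finite V] (G : SimpleGraph V) : LocalBoxRep G (lbox G) :=
  Nat.sInf_mem (exists_localBoxRep G)

theorem LocalBoxRep.of_cover [Finite V] {ι : Type} [Fintype ι]
    (S : ι → Set V) {m t : ℕ} (hS : ∀ u v, u ≠ v → ∃ q, u ∈ S q ∧ v ∈ S q)
    (hrep : ∀ q, LocalBoxRep (G.induce (S q)) t) (hm : ∀ v, {q | v ∈ S q}.ncard ≤ m) :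
    LocalBoxRep G (m * t) := by
  choose k I hI hadj hcount using hrep
  let J : (Σ q, Fin (k q)) → SimpleGraph V := fun p => extendUniversal (S p.1) (I p.1 p.2)
  refine .of_finite J (fun p => (hI p.1 p.2).extendUniversal) (fun u v huv => ⟨?_, ?_⟩) fun v => ?_
  · exact fun h p => ⟨huv, fun hu hv => (hadj p.1 ⟨u, hu⟩ ⟨v, hv⟩ (by simpa using huv)).1 h p.2⟩
  · intro h
    obtain ⟨q, hu, hv⟩ := hS u v huv
    exact (hadj q ⟨u, hu⟩ ⟨v, hv⟩ (by simpa using huv)).2 fun s =>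
      (extendUniversal_adj_iff hu hv).1 (h ⟨q, s⟩)
  calc _ ≤ {q | v ∈ S q}.ncard * t :=
        ncard_sigma_le {p | ¬ IsUniversal (J p) v} _ (fun p hp => by_contra fun hv =>
          hp (isUniversal_extendUniversal_of_notMem hv)) fun q (hv : v ∈ S q) => ?_
    _ ≤ m * t := Nat.mul_le_mul_right t (hm v)
  convert hcount q ⟨v, hv⟩ using 4
  exact (isUniversal_extendUniversal_iff hv).not

end LocalBoxRep

theorem exists_lt_and_mem_pair {α : Type*} [LinearOrder α] [Nontrivial α] (a b : α) :
    ∃ x y, x < y ∧ (a = x ∨ a = y) ∧ (b = x ∨ b = y) := by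
  rcases lt_trichotomy a b with h | rfl | h
  · exact ⟨a, b, h, by simp⟩
  · obtain ⟨c, hc⟩ := exists_ne a
    rcases hc.lt_or_gt with h | h
    · exact ⟨c, a, h, by simp⟩
    · exact ⟨a, c, h, by simp⟩
  · exact ⟨b, a, h, by simp⟩

/-- A pair containing `a` is determined by its other element. -/
theorem ncard_lt_pairs_mem_le {α : Type*} [LinearOrder α] [Finite α] (a : α) :
    {q : {p : α × α // p.1 < p.2} | a = q.1.1 ∨ a = q.1.2}.ncard ≤ Nat.card α - 1 := by
  calc _ ≤ ({a}ᶜ : Set α).ncard :=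
        ncard_le_ncard_of_injOn (fun q => if q.1.1 = a then q.1.2 else q.1.1) ?_ ?_ (toFinite _)
    _ = Nat.card α - 1 := by rw [ncard_compl, ncard_singleton]
  · rintro ⟨⟨x, y⟩, hxy⟩ hq
    grind
  · rintro ⟨⟨x, y⟩, hxy⟩ hq ⟨⟨x', y'⟩, hxy'⟩ hq' h
    grind

/-- if V(G) is partitioned into r ≥ 2 parts then
lbox(G) ≤ (r-1) · max over pairs i < j of lbox(G[V_i ∪ V_j]). -/
theorem stmt1 {V : Type} [Fintype V] (G : SimpleGraph V) (r : ℕ) (hr : 2 ≤ r)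
    (P : Fin r → Finset V)
    (hdisj : ∀ i j : Fin r, i ≠ j → Disjoint (P i) (P j))
    (hcover : ∀ v : V, ∃ i : Fin r, v ∈ P i)
    (M : ℕ)
    (hM : ∀ i j : Fin r, i < j → lbox (G.induce (↑(P i ∪ P j) : Set V)) ≤ M) :
    lbox G ≤ (r - 1) * M := by
  have : Nontrivial (Fin r) := Fin.nontrivial_iff_two_le.2 hr
  let S : {p : Fin r × Fin r // p.1 < p.2} → Set V := fun q => ↑(P q.1.1 ∪ P q.1.2)
  refine Nat.sInf_le (LocalBoxRep.of_cover S (fun u v _ => ?_)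
    (fun q => (localBoxRep_lbox _).mono (hM _ _ q.2)) fun v => ?_)
  · obtain ⟨a, ha⟩ := hcover u
    obtain ⟨b, hb⟩ := hcover v
    obtain ⟨x, y, hxy, hax, hby⟩ := exists_lt_and_mem_pair a b
    refine ⟨⟨(x, y), hxy⟩, ?_, ?_⟩ <;> grind
  · obtain ⟨a, ha⟩ := hcover v
    have hpart : ∀ i, v ∈ P i → a = i := fun i hi =>
      by_contra fun h => Finset.disjoint_left.1 (hdisj a i h) ha hi
    calc {q | v ∈ S q}.ncard
        ≤ {q : {p : Fin r × Fin r // p.1 < p.2} | a = q.1.1 ∨ a = q.1.2}.ncard :=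
          ncard_le_ncard (fun q hq => ?_) (toFinite _)
      _ ≤ r - 1 := by simpa using ncard_lt_pairs_mem_le a
    rcases Finset.mem_union.1 hq with h | h
    exacts [.inl (hpart _ h), .inr (hpart _ h)]
end

section
/- Let G be a finite simple claw-free graph with chromatic number χ(G) ≥ 2. Then lbox(G) ≤ 3(χ(G) − 1). -/
/-!
Fix a proper colouring of `G` with colours `0, …, m`. Claw-freeness means that every vertex has
at most two neighbours in any colour class. For colours `i < j`, join two vertices of colour `j`
when they have a common neighbour of colour `i`: this graph has maximum degree two, hence is
3-colourable, and for each of its colour classes `Y` the edges between `Y` and colour class `i`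
form disjoint paths `x — y — x'`. Such a configuration is an interval graph (points for colour
`i`, one interval per `y`), completed by an interval containing everything for all other
vertices. These three graphs per pair `i < j`, together with one graph separating the last colour
class, intersect to `G`, and a vertex of colour `c` is non-universal in at most
`3 (m - c) + c + [c = m] ≤ 3 m` of them.
-/

open Classical

variable {V : Type}

def natIntervalGraph (l r : V → ℕ) : SimpleGraph V where
  Adj u v := u ≠ v ∧ l u ≤ r v ∧ l v ≤ r u
  symm := ⟨fun _ _ h => ⟨h.1.symm, h.2.2, h.2.1⟩⟩
  loopless := ⟨fun _ h => h.1 rfl⟩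

theorem isIntervalGraph_natIntervalGraph {l r : V → ℕ} (hlr : ∀ v, l v ≤ r v) :
    IsIntervalGraph (natIntervalGraph l r) := by
  refine ⟨fun v => l v, fun v => r v, fun u v huv => ?_⟩
  simp only [natIntervalGraph, Set.Icc_inter_Icc, Set.nonempty_Icc, sup_le_iff, le_inf_iff,
    Nat.cast_le]
  have := hlr u
  have := hlr v
  tauto

theorem exists_isIntervalGraph_extend [Fintype V] (S : Set V) (l r : V → ℕ)
    (hlr : ∀ v, l v ≤ r v) :
    ∃ J : SimpleGraph V, IsIntervalGraph J ∧
      (∀ u ∈ S, ∀ v ∈ S, u ≠ v → (J.Adj u v ↔ l u ≤ r v ∧ l v ≤ r u)) ∧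
      ∀ v ∉ S, IsUniversal J v := by
  classical
  set M := Finset.univ.sup r
  have hrM : ∀ v, r v ≤ M := fun v => Finset.le_sup (Finset.mem_univ v)
  refine ⟨natIntervalGraph (fun v => if v ∈ S then l v else 0)
    (fun v => if v ∈ S then r v else M), isIntervalGraph_natIntervalGraph fun v => ?_,
    fun u hu v hv huv => ?_, fun v hv u huv => ?_⟩
  · split_ifs
    exacts [hlr v, Nat.zero_le M]
  · simp [natIntervalGraph, hu, hv, huv]
  · refine ⟨huv.symm, ?_, ?_⟩ <;> dsimp only <;> split_ifs <;> grind

theorem localBoxRep_of_fintype {ι : Type} [Fintype ι] {G : SimpleGraph V} {t : ℕ}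
    (I : ι → SimpleGraph V) (hI : ∀ κ, IsIntervalGraph (I κ))
    (hadj : ∀ u v, u ≠ v → (G.Adj u v ↔ ∀ κ, (I κ).Adj u v))
    (hcount : ∀ v, {κ | ¬ IsUniversal (I κ) v}.ncard ≤ t) : LocalBoxRep G t := by
  set e := Fintype.equivFin ι
  refine ⟨Fintype.card ι, fun i => I (e.symm i), fun i => hI _,
    fun u v huv => (hadj u v huv).trans e.symm.forall_congr_right.symm, fun v => ?_⟩
  rw [← Set.preimage_ofPred_eq (p := fun κ => ¬ IsUniversal (I κ) v),
    Set.ncard_preimage_of_injective_subset_range e.symm.injective (by simp)]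
  exact hcount v

/-- Between `X` and `Y`, `G` is a disjoint union of paths `x — y — x'` with middle vertex in `Y`. -/
structure IsCherryPair (G : SimpleGraph V) (X Y : Set V) : Prop where
  disjoint : Disjoint X Y
  isIndepSet_left : G.IsIndepSet X
  isIndepSet_right : G.IsIndepSet Y
  exists_subset_singleton : ∀ x ∈ X, ∃ y, G.neighborSet x ∩ Y ⊆ {y}
  exists_subset_pair : ∀ y ∈ Y, ∃ a b, G.neighborSet y ∩ X ⊆ {a, b}

namespace IsCherryPair

variable {G : SimpleGraph V} {X Y : Set V}

/-- Each `y ∈ Y` owns the slot `[3 e y, 3 e y + 2]` and its `X`-neighbours sit at the two ends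
of it; an `X`-vertex without `Y`-neighbour sits in the middle of its own slot. -/
theorem exists_points_in_slots (h : IsCherryPair G X Y) {e : V → ℕ} (he : e.Injective) :
    ∃ p : V → ℕ, Set.InjOn p X ∧
      ∀ x ∈ X, ∀ y ∈ Y, (3 * e y ≤ p x ∧ p x ≤ 3 * e y + 2 ↔ G.Adj x y) := by
  classical
  choose! c hc using h.exists_subset_singleton
  choose! a b hab using h.exists_subset_pair
  set p : V → ℕ := fun x => if ∃ y ∈ Y, G.Adj x y
    then 3 * e (c x) + (if x = a (c x) then 0 else 2) else 3 * e x + 1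
  have hp_adj : ∀ x ∈ X, ∀ y ∈ Y, G.Adj x y → p x = 3 * e y + if x = a y then 0 else 2 := by
    intro x hx y hy hxy
    obtain rfl : y = c x := hc x hx ⟨hxy, hy⟩
    exact if_pos ⟨c x, hy, hxy⟩
  have hp_isolated : ∀ x, (¬ ∃ y ∈ Y, G.Adj x y) → p x = 3 * e x + 1 := fun x hx => if_neg hx
  refine ⟨p, fun x hx x' hx' hpp => ?_, fun x hx y hy => ⟨fun hpy => ?_, fun hxy => ?_⟩⟩
  · by_cases h₁ : ∃ y ∈ Y, G.Adj x y <;> by_cases h₂ : ∃ y ∈ Y, G.Adj x' y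
    · obtain ⟨y, hy, hxy⟩ := h₁
      obtain ⟨y', hy', hxy'⟩ := h₂
      rw [hp_adj x hx y hy hxy, hp_adj x' hx' y' hy' hxy'] at hpp
      obtain rfl : y = y' := he (by split_ifs at hpp <;> omega)
      have hxab := hab y hy ⟨hxy.symm, hx⟩
      have hx'ab := hab y hy ⟨hxy'.symm, hx'⟩
      simp only [Set.mem_insert_iff, Set.mem_singleton_iff] at hxab hx'ab
      split_ifs at hpp <;> grind
    · obtain ⟨y, hy, hxy⟩ := h₁
      rw [hp_adj x hx y hy hxy, hp_isolated x' h₂] at hpp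
      split_ifs at hpp <;> omega
    · obtain ⟨y', hy', hxy'⟩ := h₂
      rw [hp_isolated x h₁, hp_adj x' hx' y' hy' hxy'] at hpp
      split_ifs at hpp <;> omega
    · rw [hp_isolated x h₁, hp_isolated x' h₂] at hpp
      exact he (by omega)
  · by_cases h₁ : ∃ y ∈ Y, G.Adj x y
    · obtain ⟨y', hy', hxy'⟩ := h₁
      rw [hp_adj x hx y' hy' hxy'] at hpy
      obtain rfl : y' = y := he (by split_ifs at hpy <;> omega)
      exact hxy'
    · rw [hp_isolated x h₁] at hpy
      obtain rfl : x = y := he (by omega)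
      exact absurd hy (h.disjoint.notMem_of_mem_left hx)
  · rw [hp_adj x hx y hy hxy]
    split_ifs <;> omega

theorem exists_intervalGraph [Fintype V] (h : IsCherryPair G X Y) :
    ∃ J : SimpleGraph V, IsIntervalGraph J ∧
      (∀ u ∈ X ∪ Y, ∀ v ∈ X ∪ Y, u ≠ v → (J.Adj u v ↔ G.Adj u v)) ∧
      ∀ v ∉ X ∪ Y, IsUniversal J v := by
  classical
  obtain ⟨e, he⟩ := exists_injective_nat V
  obtain ⟨p, hinj, hslot⟩ := h.exists_points_in_slots he
  obtain ⟨J, hJ, hadj, huniv⟩ := exists_isIntervalGraph_extend (X ∪ Y)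
    (fun v => if v ∈ X then p v else 3 * e v) (fun v => if v ∈ X then p v else 3 * e v + 2)
    (fun v => by split_ifs <;> omega)
  refine ⟨J, hJ, fun u hu v hv huv => (hadj u hu v hv huv).trans ?_, huniv⟩
  rcases hu with hu | hu <;> rcases hv with hv | hv
  · simp only [hu, hv, if_true]
    exact iff_of_false (fun hle => huv (hinj hu hv (le_antisymm hle.1 hle.2)))
      (h.isIndepSet_left hu hv huv)
  · simp only [hu, h.disjoint.notMem_of_mem_right hv, if_true, if_false]
    rw [← hslot u hu v hv]
    exact and_comm
  · simp only [h.disjoint.notMem_of_mem_right hu, hv, if_true, if_false]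
    rw [G.adj_comm, ← hslot v hv u hu]
  · simp only [h.disjoint.notMem_of_mem_right hu, h.disjoint.notMem_of_mem_right hv, if_false]
    exact iff_of_false (fun hle => huv (he (by omega))) (h.isIndepSet_right hu hv huv)

end IsCherryPair

theorem localBoxRep_of_cover [Fintype V] {ι : Type} [Fintype ι] {G : SimpleGraph V} {t : ℕ}
    {X Y : ι → Set V} (hXY : ∀ κ, IsCherryPair G (X κ) (Y κ))
    (hcover : ∀ u v, u ≠ v → ¬ G.Adj u v → ∃ κ, u ∈ X κ ∪ Y κ ∧ v ∈ X κ ∪ Y κ)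
    (hcount : ∀ v, {κ | v ∈ X κ ∪ Y κ}.ncard ≤ t) : LocalBoxRep G t := by
  choose J hJ hadj huniv using fun κ => (hXY κ).exists_intervalGraph
  refine localBoxRep_of_fintype J hJ (fun u v huv => ⟨fun hG κ => ?_, fun hJuv => ?_⟩)
    fun v => (Set.ncard_le_ncard fun κ hκ => ?_).trans (hcount v)
  · by_cases hu : u ∈ X κ ∪ Y κ
    · by_cases hv : v ∈ X κ ∪ Y κ
      · exact (hadj κ u hu v hv huv).2 hG
      · exact (huniv κ v hv u huv).symm
    · exact huniv κ u hu v huv.symm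
  · by_contra hG
    obtain ⟨κ, hu, hv⟩ := hcover u v huv hG
    exact hG ((hadj κ u hu v hv huv).1 (hJuv κ))
  · by_contra hv
    exact hκ (huniv κ v hv)

theorem SimpleGraph.colorable_succ_of_ncard_neighborSet_le [Finite V] {H : SimpleGraph V}
    {k : ℕ} (h : ∀ v, (H.neighborSet v).ncard ≤ k) : H.Colorable (k + 1) := by
  classical
  have := Fintype.ofFinite V
  suffices ∀ s : Finset V, ∃ f : V → Fin (k + 1), ∀ u ∈ s, ∀ w ∈ s, H.Adj u w → f u ≠ f w by
    obtain ⟨f, hf⟩ := this Finset.univ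
    exact ⟨SimpleGraph.Coloring.mk f fun huw =>
      hf _ (Finset.mem_univ _) _ (Finset.mem_univ _) huw⟩
  intro s
  induction s using Finset.induction_on with
  | empty => exact ⟨0, by simp⟩
  | insert a s ha ih =>
    obtain ⟨f, hf⟩ := ih
    obtain ⟨c, hc⟩ : ∃ c, c ∉ f '' H.neighborSet a := by
      by_contra! hall
      have := Set.ncard_image_le (f := f) (s := H.neighborSet a)
      rw [Set.eq_univ_of_forall hall, Set.ncard_univ, Nat.card_eq_fintype_card,
        Fintype.card_fin] at this
      have := h a
      omega
    refine ⟨Function.update f a c, ?_⟩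
    simp only [Finset.mem_insert]
    rintro u (rfl | hu) w (rfl | hw) huw
    · exact absurd huw (H.loopless.irrefl _)
    · rw [Function.update_self, Function.update_of_ne (ne_of_mem_of_not_mem hw ha)]
      exact fun hcw => hc ⟨w, huw, hcw.symm⟩
    · rw [Function.update_self, Function.update_of_ne (ne_of_mem_of_not_mem hu ha)]
      exact fun hcu => hc ⟨u, huw.symm, hcu⟩
    · rw [Function.update_of_ne (ne_of_mem_of_not_mem hu ha),
        Function.update_of_ne (ne_of_mem_of_not_mem hw ha)]
      exact hf u hu w hw huw

namespace ClawFree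

variable {G : SimpleGraph V} {X : Set V}

theorem exists_subset_pair_of_mem (hG : ClawFree G) (hX : G.IsIndepSet X) {v a : V}
    (ha : a ∈ G.neighborSet v ∩ X) : ∃ b, G.neighborSet v ∩ X ⊆ {a, b} := by
  by_contra! h
  obtain ⟨b, hb, hba⟩ := Set.not_subset.1 (h a)
  obtain ⟨c, hc, hcab⟩ := Set.not_subset.1 (h b)
  simp only [Set.mem_insert_iff, Set.mem_singleton_iff, not_or] at hba hcab
  exact hG v a b c (Ne.symm hba.1) (Ne.symm hcab.1) (Ne.symm hcab.2)
    ⟨ha.1, hb.1, hc.1, hX ha.2 hb.2 (Ne.symm hba.1), hX ha.2 hc.2 (Ne.symm hcab.1),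
      hX hb.2 hc.2 (Ne.symm hcab.2)⟩

theorem exists_subset_pair (hG : ClawFree G) (hX : G.IsIndepSet X) (v : V) :
    ∃ a b, G.neighborSet v ∩ X ⊆ {a, b} := by
  rcases (G.neighborSet v ∩ X).eq_empty_or_nonempty with h | ⟨a, ha⟩
  · exact ⟨v, v, h ▸ Set.empty_subset _⟩
  · exact ⟨a, hG.exists_subset_pair_of_mem hX ha⟩

end ClawFree

def commonNeighborGraph (G : SimpleGraph V) (X Y : Set V) : SimpleGraph V where
  Adj y z := y ≠ z ∧ y ∈ Y ∧ z ∈ Y ∧ ∃ x ∈ X, G.Adj y x ∧ G.Adj z x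
  symm := ⟨fun _ _ ⟨hne, hy, hz, x, hx, hyx, hzx⟩ => ⟨hne.symm, hz, hy, x, hx, hzx, hyx⟩⟩
  loopless := ⟨fun _ h => h.1 rfl⟩

/-- A vertex `y ∈ Y` has at most two neighbours `x ∈ X`, and each of them at most one
neighbour in `Y` besides `y`: the common-neighbour graph has maximum degree two. -/
theorem ClawFree.colorable_commonNeighborGraph [Finite V] {G : SimpleGraph V} {X Y : Set V}
    (hG : ClawFree G) (hX : G.IsIndepSet X) (hY : G.IsIndepSet Y) :
    (commonNeighborGraph G X Y).Colorable 3 := by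
  refine SimpleGraph.colorable_succ_of_ncard_neighborSet_le fun y => ?_
  have companion : ∀ x, ∃ c, y ∈ G.neighborSet x ∩ Y → G.neighborSet x ∩ Y ⊆ {y, c} := by
    intro x
    by_cases hyx : y ∈ G.neighborSet x ∩ Y
    · exact (hG.exists_subset_pair_of_mem hY hyx).imp fun _ hc _ => hc
    · exact ⟨y, fun h => absurd h hyx⟩
  obtain ⟨a, b, hab⟩ := hG.exists_subset_pair hX y
  obtain ⟨ca, hca⟩ := companion a
  obtain ⟨cb, hcb⟩ := companion b
  calc ((commonNeighborGraph G X Y).neighborSet y).ncard ≤ ({ca, cb} : Set V).ncard := by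
        refine Set.ncard_le_ncard ?_
        rintro z ⟨hyz, hy, hz, x, hx, hyx, hzx⟩
        rcases hab ⟨hyx, hx⟩ with rfl | rfl
        · exact Or.inl ((hca ⟨hyx.symm, hy⟩ ⟨hzx.symm, hz⟩).resolve_left (Ne.symm hyz))
        · exact Or.inr ((hcb ⟨hyx.symm, hy⟩ ⟨hzx.symm, hz⟩).resolve_left (Ne.symm hyz))
    _ ≤ 2 := (Set.ncard_insert_le _ _).trans (by rw [Set.ncard_singleton])

section Cover

variable {m : ℕ}

/-- Index `some (i, j, t)` with `i < j` pairs colour class `i` with the vertices of colour `j`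
and `τ`-colour `t`; index `none` takes the last colour class alone. -/
def coverLeft (C : V → Fin (m + 1)) : Option (Fin (m + 1) × Fin (m + 1) × Fin 3) → Set V
  | none => {v | C v = Fin.last m}
  | some (i, j, _) => {v | C v = i ∧ i < j}

def coverRight (C : V → Fin (m + 1)) (τ : Fin (m + 1) → Fin (m + 1) → V → Fin 3) :
    Option (Fin (m + 1) × Fin (m + 1) × Fin 3) → Set V
  | none => ∅
  | some (i, j, t) => {v | C v = j ∧ i < j ∧ τ i j v = t}

variable (C : V → Fin (m + 1)) (τ : Fin (m + 1) → Fin (m + 1) → V → Fin 3)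

theorem exists_mem_cover (u v : V) :
    ∃ κ, u ∈ coverLeft C κ ∪ coverRight C τ κ ∧ v ∈ coverLeft C κ ∪ coverRight C τ κ := by
  rcases lt_trichotomy (C u) (C v) with h | h | h
  · exact ⟨some (C u, C v, τ (C u) (C v) v), Or.inl ⟨rfl, h⟩, Or.inr ⟨rfl, h, rfl⟩⟩
  · by_cases hlast : C u = Fin.last m
    · exact ⟨none, Or.inl hlast, Or.inl (h.symm.trans hlast)⟩
    · have hlt := Fin.lt_last_iff_ne_last.2 hlast
      exact ⟨some (C u, Fin.last m, 0), Or.inl ⟨rfl, hlt⟩, Or.inl ⟨h.symm, hlt⟩⟩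
  · exact ⟨some (C v, C u, τ (C v) (C u) u), Or.inr ⟨rfl, h, rfl⟩, Or.inl ⟨rfl, h⟩⟩

/-- A vertex of colour `c` lies in the `3 (m - c)` sets with `i = c`, in one set for each `i < c`,
and in the set `none` if `c` is the last colour. -/
theorem ncard_setOf_mem_cover_le (hm : 1 ≤ m) (v : V) :
    {κ | v ∈ coverLeft C κ ∪ coverRight C τ κ}.ncard ≤ 3 * m := by
  classical
  set c := C v
  set T : Finset (Option (Fin (m + 1) × Fin (m + 1) × Fin 3)) :=
    (if c = Fin.last m then {none} else ∅) ∪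
      ((Finset.Ioi c ×ˢ Finset.univ).image fun p => some (c, p.1, p.2)) ∪
      ((Finset.Iio c).image fun i => some (i, c, τ i c v))
  have hsub : {κ | v ∈ coverLeft C κ ∪ coverRight C τ κ} ⊆ T := by
    rintro (_ | ⟨i, j, t⟩) hκ
    · have hlast : c = Fin.last m := hκ.resolve_right id
      simp [T, hlast]
    · rcases hκ with ⟨rfl, hij⟩ | ⟨rfl, hij, rfl⟩
      · refine Finset.mem_union_left _ (Finset.mem_union_right _ (Finset.mem_image.2 ?_))
        exact ⟨(j, t), Finset.mem_product.2 ⟨Finset.mem_Ioi.2 hij, Finset.mem_univ _⟩, rfl⟩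
      · exact Finset.mem_union_right _ (Finset.mem_image_of_mem _ (Finset.mem_Iio.2 hij))
  have hT : T.card ≤ (if c = Fin.last m then 1 else 0) + (m - c) * 3 + c := by
    refine (Finset.card_union_le _ _).trans (add_le_add
      ((Finset.card_union_le _ _).trans (add_le_add ?_ ?_)) ?_)
    · split_ifs <;> simp
    · exact Finset.card_image_le.trans (by simp [Fin.card_Ioi])
    · exact Finset.card_image_le.trans (by simp [Fin.card_Iio])
  have hc : (c : ℕ) ≤ m := Nat.lt_succ_iff.1 c.isLt
  calc {κ | v ∈ coverLeft C κ ∪ coverRight C τ κ}.ncard ≤ T.card := by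
        rw [← Set.ncard_coe_finset]
        exact Set.ncard_le_ncard hsub
    _ ≤ 3 * m := by
        split_ifs at hT with hlast
        · have : (c : ℕ) = m := by simp [hlast]
          omega
        · have : (c : ℕ) ≠ m := fun h => hlast (Fin.ext h)
          omega

theorem isCherryPair_cover {G : SimpleGraph V} (hG : ClawFree G) (C : G.Coloring (Fin (m + 1)))
    (τ : ∀ i j, (commonNeighborGraph G (C.colorClass i) (C.colorClass j)).Coloring (Fin 3))
    (κ : Option (Fin (m + 1) × Fin (m + 1) × Fin 3)) :
    IsCherryPair G (coverLeft C κ) (coverRight C (fun i j => τ i j) κ) := by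
  rcases κ with _ | ⟨i, j, t⟩
  · exact ⟨Set.disjoint_empty _, C.isIndepSet_colorClass _, Set.pairwise_empty _,
      fun x _ => ⟨x, by simp [coverRight]⟩, fun _ hy => hy.elim⟩
  refine ⟨Set.disjoint_left.2 fun v hv hv' => hv.2.ne (hv.1.symm.trans hv'.1),
    (C.isIndepSet_colorClass i).mono fun v hv => hv.1,
    (C.isIndepSet_colorClass j).mono fun v hv => hv.1, fun x hx => ?_, fun y _ => ?_⟩
  · rcases (G.neighborSet x ∩ coverRight C (fun i j => τ i j) (some (i, j, t))).eq_empty_or_nonempty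
      with h | ⟨y, hy⟩
    · exact ⟨x, h ▸ Set.empty_subset _⟩
    · refine ⟨y, fun z hz => by_contra fun hzy => (τ i j).valid ?_ (hz.2.2.2.trans hy.2.2.2.symm)⟩
      exact ⟨hzy, hz.2.1, hy.2.1, x, hx.1, hz.1.symm, hy.1.symm⟩
  · obtain ⟨a, b, hab⟩ := hG.exists_subset_pair (C.isIndepSet_colorClass i) y
    exact ⟨a, b, fun x hx => hab ⟨hx.1, hx.2.1⟩⟩

end Cover

/-- claw-free G with chromatic number χ(G) ≥ 2 satisfies
lbox(G) ≤ 3(χ(G) − 1). -/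
theorem stmt6 {V : Type} [Fintype V] (G : SimpleGraph V) (hclaw : ClawFree G)
    (n : ℕ) (hchrom : G.chromaticNumber = n) (hn : 2 ≤ n) :
    lbox G ≤ 3 * (n - 1) := by
  obtain ⟨m, rfl⟩ : ∃ m, n = m + 1 := ⟨n - 1, by omega⟩
  obtain ⟨C⟩ : G.Colorable (m + 1) := G.chromaticNumber_le_iff_colorable.1 hchrom.le
  have τ i j := (hclaw.colorable_commonNeighborGraph (C.isIndepSet_colorClass i)
    (C.isIndepSet_colorClass j)).some
  exact Nat.sInf_le (localBoxRep_of_cover (isCherryPair_cover hclaw C τ)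
    (fun u v _ _ => exists_mem_cover C _ u v) (ncard_setOf_mem_cover_le C _ (by omega)))
end

section
/- Let G be a finite simple graph and suppose the edge set of the complement of G can be partitioned into complete bipartite subgraphs B_1, …, B_k such that every vertex of G lies in (i.e., is incident to an edge of) at most t of the subgraphs B_1, …, B_k. Then lbox(G) ≤ t. -/
open Classical

/- Each biclique `B_i = (A_i, B_i)` of the partition of `Gᶜ` yields the interval graph
`I_i = B_iᶜ`: put the vertices of `A_i` at `[0, 0]`, those of `B_i` at `[1, 1]` and all
others at `[0, 1]`. Then `G = ⋂ I_i` because the `B_i` cover `Gᶜ` and lie in it, and a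
vertex outside `A_i ∪ B_i` is universal in `I_i`, so it is non-universal in at most `t`
of the `I_i`. -/

namespace SimpleGraph

variable {V : Type}

def biclique (A B : Set V) : SimpleGraph V :=
  fromRel fun u v => u ∈ A ∧ v ∈ B

lemma compl_biclique_adj {A B : Set V} {u v : V} :
    (biclique A B)ᶜ.Adj u v ↔ u ≠ v ∧ ¬((u ∈ A ∧ v ∈ B) ∨ (v ∈ A ∧ u ∈ B)) := by
  simp only [biclique, compl_adj, fromRel_adj]
  tauto

end SimpleGraph

open SimpleGraph (biclique compl_biclique_adj)

variable {V : Type}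

lemma isIntervalGraph_compl_biclique {A B : Set V} (h : Disjoint A B) :
    IsIntervalGraph (biclique A B)ᶜ := by
  refine ⟨fun v => if v ∈ B then 1 else 0, fun v => if v ∈ A then 0 else 1, ?_⟩
  intro u v huv
  rw [compl_biclique_adj, Set.Icc_inter_Icc, Set.nonempty_Icc, sup_le_iff, le_inf_iff,
    le_inf_iff]
  beta_reduce
  have hu := h.notMem_of_mem_left (a := u)
  have hv := h.notMem_of_mem_left (a := v)
  split_ifs <;> norm_num <;> tauto

lemma isUniversal_compl_biclique {A B : Set V} {v : V} (hA : v ∉ A) (hB : v ∉ B) :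
    IsUniversal (biclique A B)ᶜ v :=
  fun _ hu => compl_biclique_adj.mpr ⟨hu.symm, by tauto⟩

theorem stmt8_general {V : Type} (G : SimpleGraph V) (k t : ℕ)
    (A B : Fin k → Finset V)
    (hdisj : ∀ i, Disjoint (A i) (B i))
    (hedge : ∀ i : Fin k, ∀ a ∈ A i, ∀ b ∈ B i, Gᶜ.Adj a b)
    (hpart : ∀ u v : V, Gᶜ.Adj u v →
      ∃! i : Fin k, (u ∈ A i ∧ v ∈ B i) ∨ (v ∈ A i ∧ u ∈ B i))
    (hfreq : ∀ v : V, {i : Fin k | v ∈ A i ∨ v ∈ B i}.ncard ≤ t) :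
    lbox G ≤ t := by
  refine Nat.sInf_le ⟨k, fun i => (biclique (A i : Set V) (B i))ᶜ,
    fun i => isIntervalGraph_compl_biclique (Finset.disjoint_coe.mpr (hdisj i)), ?_, ?_⟩
  · intro u v huv
    simp only [compl_biclique_adj, Finset.mem_coe, ne_eq, huv, not_false_eq_true, true_and]
    constructor
    · rintro hG i (⟨hu, hv⟩ | ⟨hv, hu⟩)
      · exact (hedge i u hu v hv).2 hG
      · exact (hedge i v hv u hu).2 hG.symm
    · intro hI
      by_contra hG
      obtain ⟨i, hi, -⟩ := hpart u v ⟨huv, hG⟩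
      exact hI i hi
  · intro v
    refine (Set.ncard_le_ncard (fun i hi => ?_)).trans (hfreq v)
    by_contra hout
    simp only [Set.mem_ofPred_eq, not_or] at hout
    exact hi (isUniversal_compl_biclique hout.1 hout.2)

/-- if the edge set of the complement of G is partitioned into
complete bipartite subgraphs with parts A i, B i such that every vertex lies in
at most t of them, then lbox(G) ≤ t. -/
theorem stmt8 {V : Type} [Fintype V] (G : SimpleGraph V) (k t : ℕ)
    (A B : Fin k → Finset V)
    (hdisj : ∀ i, Disjoint (A i) (B i))
    (hedge : ∀ i : Fin k, ∀ a ∈ A i, ∀ b ∈ B i, Gᶜ.Adj a b)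
    (hpart : ∀ u v : V, Gᶜ.Adj u v →
      ∃! i : Fin k, (u ∈ A i ∧ v ∈ B i) ∨ (v ∈ A i ∧ u ∈ B i))
    (hfreq : ∀ v : V, {i : Fin k | v ∈ A i ∨ v ∈ B i}.ncard ≤ t) :
    lbox G ≤ t :=
  stmt8_general G k t A B hdisj hedge hpart hfreq
end

section
/- Every finite simple graph G with m ≥ 1 edges satisfies lbox(G) ≤ (2^(9·log* √m) + 2) · √m. -/
open Classical

/-!
With `s = ⌊√m⌋`, the non-adjacent pairs of `G` are separated by interval supergraphs of `G` of
three kinds, every vertex being non-universal in `O(s)` of them. A single graph, the clique on the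
non-isolated vertices, handles all pairs containing an isolated vertex. Each of the fewer than
`2s + 2` vertices of degree `> s` gets a co-star: the complete graph minus the non-edges of `G` at
that vertex. The remaining vertices, of degree between `1` and `s`, are packed greedily into
`2s + 2` blocks of total degree `≤ 2s`, so that every block has a closed neighbourhood of size
`≤ 4s`. A pair `u, v` of them is separated by the co-star from `u` into the block of `v` if `u` lies
in the closed neighbourhood of that block, and otherwise by the co-biclique between the block of
`u` (less that neighbourhood) and the block of `v`. This gives `lbox G ≤ 11 s + 7`, well below the
claimed bound when `m ≥ 2`; when `m = 1` the clique graph alone is `G`.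
-/

open Finset

namespace LocalBoxicity

section Partition

variable {α : Type} (w : α → ℕ) {s : ℕ}

theorem exists_subset_lt_sum_le_two_mul {T : Finset α} (hw : ∀ a ∈ T, w a ≤ s)
    (hT : s < ∑ a ∈ T, w a) : ∃ Q ⊆ T, s < ∑ a ∈ Q, w a ∧ ∑ a ∈ Q, w a ≤ 2 * s := by
  induction T using Finset.induction_on with
  | empty => simp at hT
  | insert a T ha ih =>
    rw [sum_insert ha] at hT
    by_cases hs : s < ∑ b ∈ T, w b
    · obtain ⟨Q, hQ, h⟩ := ih (fun b hb => hw b (mem_insert_of_mem hb)) hs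
      exact ⟨Q, hQ.trans (subset_insert _ _), h⟩
    · have := hw a (mem_insert_self _ _)
      exact ⟨insert a T, subset_rfl, by rw [sum_insert ha]; omega⟩

theorem exists_partition_sum_le {g : ℕ} {T : Finset α} (hw : ∀ a ∈ T, w a ≤ s)
    (hT : ∑ a ∈ T, w a < g * (s + 1)) :
    ∃ f : α → Fin g, ∀ j, ∑ a ∈ T with f a = j, w a ≤ 2 * s := by
  induction g generalizing T with
  | zero => simp at hT
  | succ g ih =>
    by_cases hsmall : ∑ a ∈ T, w a ≤ 2 * s
    · exact ⟨fun _ => 0, fun j => (sum_le_sum_of_subset (filter_subset _ _)).trans hsmall⟩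
    -- Fill the last bin beyond `s` and pack the rest into the other `g` bins.
    obtain ⟨Q, hQT, hQs, hQ2⟩ := exists_subset_lt_sum_le_two_mul w hw (by omega)
    have hsplit := sum_sdiff hQT (f := w)
    rw [Nat.succ_mul] at hT
    obtain ⟨f, hf⟩ := ih (T := T \ Q) (fun a ha => hw a (mem_sdiff.mp ha).1) (by omega)
    refine ⟨fun a => if a ∈ Q then Fin.last g else (f a).castSucc, fun j => ?_⟩
    rcases Fin.eq_castSucc_or_eq_last j with ⟨j, rfl⟩ | rfl
    · convert hf j using 2
      ext a
      by_cases ha : a ∈ Q <;> simp [ha, (Fin.castSucc_ne_last _).symm]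
    · refine (sum_le_sum_of_subset fun a ha => ?_).trans hQ2
      by_contra haQ
      simp [haQ] at ha

end Partition

theorem ncard_setOf_sum_le {α β : Type} (p : α ⊕ β → Prop) :
    {x | p x}.ncard ≤ {a | p (.inl a)}.ncard + {b | p (.inr b)}.ncard := by
  have h : {x | p x} = Sum.inl '' {a | p (.inl a)} ∪ Sum.inr '' {b | p (.inr b)} := by
    ext (a | b) <;> simp
  rw [h, ← Set.ncard_image_of_injective {a | p (.inl a)} Sum.inl_injective,
    ← Set.ncard_image_of_injective {b | p (.inr b)} Sum.inr_injective]
  exact Set.ncard_union_le _ _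

variable {V : Type}

theorem isIntervalGraph_of_endpoints {I : SimpleGraph V} (l r : V → ℝ)
    (h : ∀ u v, u ≠ v → (I.Adj u v ↔ max (l u) (l v) ≤ min (r u) (r v))) :
    IsIntervalGraph I :=
  ⟨l, r, fun u v huv => by rw [h u v huv, Set.Icc_inter_Icc, Set.nonempty_Icc]⟩

def cliqueOn (S : Set V) : SimpleGraph V where
  Adj u v := u ≠ v ∧ u ∈ S ∧ v ∈ S
  symm := ⟨fun _ _ h => ⟨h.1.symm, h.2.2, h.2.1⟩⟩
  loopless := ⟨fun _ h => h.1 rfl⟩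

def coBiclique (A B : Set V) : SimpleGraph V where
  Adj u v := u ≠ v ∧ ¬ (u ∈ A ∧ v ∈ B) ∧ ¬ (u ∈ B ∧ v ∈ A)
  symm := ⟨fun _ _ ⟨h, h₁, h₂⟩ => ⟨h.symm, fun h' => h₂ h'.symm, fun h' => h₁ h'.symm⟩⟩
  loopless := ⟨fun _ h => h.1 rfl⟩

theorem isIntervalGraph_cliqueOn [Countable V] (S : Set V) : IsIntervalGraph (cliqueOn S) := by
  obtain ⟨p, hp⟩ := exists_injective_nat V
  refine isIntervalGraph_of_endpoints (fun v => if v ∈ S then 0 else (p v + 1 : ℝ))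
    (fun v => if v ∈ S then 0 else (p v + 1 : ℝ)) fun u v huv => ?_
  have hne : p u ≠ p v := hp.ne huv
  simp only [cliqueOn, ne_eq, huv, not_false_eq_true, true_and, max_le_iff, le_min_iff, le_refl]
  split_ifs <;> simp_all <;> first | positivity | (norm_cast; omega)

theorem isIntervalGraph_coBiclique {A B : Set V} (hAB : Disjoint A B) :
    IsIntervalGraph (coBiclique A B) := by
  refine isIntervalGraph_of_endpoints (fun v => if v ∈ B then 1 else 0)
    (fun v => if v ∈ A then 0 else 1) fun u v huv => ?_
  have hu : u ∈ A → u ∉ B := fun h => Set.disjoint_left.mp hAB h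
  have hv : v ∈ A → v ∉ B := fun h => Set.disjoint_left.mp hAB h
  simp only [coBiclique, ne_eq, huv, not_false_eq_true, true_and]
  by_cases huA : u ∈ A <;> by_cases huB : u ∈ B <;> by_cases hvA : v ∈ A <;>
    by_cases hvB : v ∈ B <;> simp_all

variable {G : SimpleGraph V} {A B : Set V}

theorem le_coBiclique (h : ∀ x ∈ A, ∀ y ∈ B, ¬ G.Adj x y) : G ≤ coBiclique A B :=
  fun u v huv => ⟨G.ne_of_adj huv, fun hh => h u hh.1 v hh.2 huv,
    fun hh => h v hh.2 u hh.1 huv.symm⟩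

theorem not_adj_coBiclique {u v : V} (hu : u ∈ A) (hv : v ∈ B) :
    ¬ (coBiclique A B).Adj u v :=
  fun h => h.2.1 ⟨hu, hv⟩

theorem mem_of_not_isUniversal_coBiclique {v : V} (h : ¬ IsUniversal (coBiclique A B) v) :
    (v ∈ A ∧ B.Nonempty) ∨ (v ∈ B ∧ A.Nonempty) := by
  simp only [IsUniversal, not_forall] at h
  obtain ⟨u, hu, h⟩ := h
  by_cases hA : v ∈ A ∧ u ∈ B
  · exact Or.inl ⟨hA.1, u, hA.2⟩
  by_cases hB : v ∈ B ∧ u ∈ A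
  · exact Or.inr ⟨hB.1, u, hB.2⟩
  exact absurd ⟨Ne.symm hu, hA, hB⟩ h

variable (G) in
def LocalIntervalCover (P : V → V → Prop) (t : ℕ) : Prop :=
  ∃ (ι : Type) (_ : Fintype ι) (I : ι → SimpleGraph V),
    (∀ i, IsIntervalGraph (I i)) ∧ (∀ i, G ≤ I i) ∧
    (∀ u v, u ≠ v → ¬ G.Adj u v → P u v → ∃ i, ¬ (I i).Adj u v) ∧
    ∀ v, {i | ¬ IsUniversal (I i) v}.ncard ≤ t

namespace LocalIntervalCover

variable {P Q : V → V → Prop} {t t' : ℕ}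

theorem mono (h : LocalIntervalCover G P t) (hPQ : ∀ u v, Q u v → P u v) (ht : t ≤ t') :
    LocalIntervalCover G Q t' := by
  obtain ⟨ι, _, I, hI, hle, hsep, hloc⟩ := h
  exact ⟨ι, inferInstance, I, hI, hle, fun u v huv hnadj hQ => hsep u v huv hnadj (hPQ u v hQ),
    fun v => (hloc v).trans ht⟩

theorem sup (hP : LocalIntervalCover G P t) (hQ : LocalIntervalCover G Q t') :
    LocalIntervalCover G (fun u v => P u v ∨ Q u v) (t + t') := by
  obtain ⟨ι, _, I, hI, hle, hsep, hloc⟩ := hP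
  obtain ⟨κ, _, J, hJ, hle', hsep', hloc'⟩ := hQ
  refine ⟨ι ⊕ κ, inferInstance, Sum.elim I J, Sum.forall.mpr ⟨hI, hJ⟩,
    Sum.forall.mpr ⟨hle, hle'⟩, fun u v huv hnadj hPQ => ?_,
    fun v => (ncard_setOf_sum_le _).trans (add_le_add (hloc v) (hloc' v))⟩
  rcases hPQ with hp | hq
  · obtain ⟨i, hi⟩ := hsep u v huv hnadj hp
    exact ⟨.inl i, hi⟩
  · obtain ⟨i, hi⟩ := hsep' u v huv hnadj hq
    exact ⟨.inr i, hi⟩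

theorem localBoxRep (h : LocalIntervalCover G P t)
    (hP : ∀ u v, u ≠ v → ¬ G.Adj u v → P u v) : LocalBoxRep G t := by
  obtain ⟨ι, _, I, hI, hle, hsep, hloc⟩ := h
  let e := Fintype.equivFin ι
  refine ⟨Fintype.card ι, I ∘ e.symm, fun i => hI _, fun u v huv => ⟨fun h i => hle _ h, ?_⟩,
    fun v => ?_⟩
  · intro hall
    by_contra hnadj
    obtain ⟨i, hi⟩ := hsep u v huv hnadj (hP u v huv hnadj)
    exact hi (by simpa using hall (e i))
  · exact (Set.ncard_preimage_of_injective_subset_range (s := {i | ¬ IsUniversal (I i) v})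
      e.symm.injective (by simp)).trans_le (hloc v)

end LocalIntervalCover

theorem localIntervalCover_support [Countable V] :
    LocalIntervalCover G (fun u v => u ∉ G.support ∨ v ∉ G.support) 1 := by
  refine ⟨Unit, inferInstance, fun _ => cliqueOn G.support, fun _ => isIntervalGraph_cliqueOn _,
    fun _ u v huv => ⟨G.ne_of_adj huv, G.mem_support.mpr ⟨v, huv⟩, G.mem_support.mpr ⟨u, huv.symm⟩⟩,
    fun u v _ _ h => ⟨(), fun hadj => h.elim (· hadj.2.1) (· hadj.2.2)⟩,
    fun v => (Set.ncard_le_card _).trans (by simp)⟩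

theorem localIntervalCover_stars (H : Finset V) :
    LocalIntervalCover G (fun u v => u ∈ H ∨ v ∈ H) #H := by
  refine ⟨H, inferInstance, fun h => coBiclique {(h : V)} {w | w ≠ h ∧ ¬ G.Adj h w},
    fun h => isIntervalGraph_coBiclique (Set.disjoint_singleton_left.mpr fun hh => hh.1 rfl),
    fun h => le_coBiclique ?_, fun u v huv hnadj huvH => ?_,
    fun v => (Set.ncard_le_card _).trans (by simp)⟩
  · rintro x rfl y ⟨-, hy⟩
    exact hy
  · rcases huvH with hu | hv
    · exact ⟨⟨u, hu⟩, not_adj_coBiclique rfl ⟨huv.symm, hnadj⟩⟩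
    · exact ⟨⟨v, hv⟩, fun h => h.2.2 ⟨⟨huv, fun h' => hnadj h'.symm⟩, rfl⟩⟩

section Blocks

variable [Fintype V]

variable (G) in
noncomputable def closedNbhd (B : Finset V) : Finset V :=
  B ∪ B.biUnion fun v => G.neighborFinset v

theorem mem_closedNbhd {B : Finset V} {u : V} :
    u ∈ closedNbhd G B ↔ u ∈ B ∨ ∃ w ∈ B, G.Adj w u := by
  simp [closedNbhd]

theorem card_closedNbhd_le {B : Finset V} (hB : ∀ v ∈ B, 0 < G.degree v) :
    #(closedNbhd G B) ≤ 2 * ∑ v ∈ B, G.degree v := by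
  have hcard : #B ≤ ∑ v ∈ B, G.degree v := by
    simpa using Finset.card_nsmul_le_sum B (fun v => G.degree v) 1 hB
  have hnbr : #(B.biUnion fun v => G.neighborFinset v) ≤ ∑ v ∈ B, G.degree v :=
    card_biUnion_le.trans_eq (by simp)
  exact (card_union_le _ _).trans (by omega)

variable {g : ℕ} (L : Finset V) (f : V → Fin g)

theorem mem_image_of_mem_closedNbhd {v : V} {j : Fin g}
    (h : v ∈ closedNbhd G {w ∈ L | f w = j}) : j ∈ (insert v (G.neighborFinset v)).image f := by
  rw [mem_closedNbhd] at h
  rcases h with hv | ⟨w, hw, hwv⟩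
  · exact mem_image.mpr ⟨v, mem_insert_self _ _, (mem_filter.mp hv).2⟩
  · exact mem_image.mpr ⟨w, mem_insert_of_mem ((G.mem_neighborFinset _ _).mpr hwv.symm),
      (mem_filter.mp hw).2⟩

theorem localIntervalCover_blockStars {d c : ℕ} (hdeg : ∀ v ∈ L, G.degree v ≤ d)
    (hc : ∀ j, #(closedNbhd G {w ∈ L | f w = j}) ≤ c) :
    LocalIntervalCover G
      (fun u v => u ∈ L ∧ v ∈ L ∧ u ∈ closedNbhd G {w ∈ L | f w = f v}) (d + 1 + c) := by
  -- A star is used only if its centre lies near its block; so `v` is a leaf of at most `c` stars.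
  let A : V × Fin g → Set V := fun p =>
    {x | x = p.1 ∧ p.1 ∈ L ∧ p.1 ∈ closedNbhd G {w ∈ L | f w = p.2}}
  let B : V × Fin g → Set V := fun p => {w | w ∈ L ∧ f w = p.2 ∧ w ≠ p.1 ∧ ¬ G.Adj p.1 w}
  refine ⟨V × Fin g, inferInstance, fun p => coBiclique (A p) (B p),
    fun p => isIntervalGraph_coBiclique ?_, fun p => le_coBiclique ?_,
    fun u v huv hnadj ⟨hu, hv, htouch⟩ => ⟨(u, f v), not_adj_coBiclique ⟨rfl, hu, htouch⟩
      ⟨hv, rfl, huv.symm, hnadj⟩⟩, fun v => ?_⟩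
  · exact Set.disjoint_left.mpr fun x hxA hxB => hxB.2.2.1 hxA.1
  · rintro x ⟨rfl, -⟩ y hy
    exact hy.2.2.2
  have hsub : {p | ¬ IsUniversal (coBiclique (A p) (B p)) v} ⊆
      {p | p.1 = v ∧ v ∈ L ∧ v ∈ closedNbhd G {w ∈ L | f w = p.2}} ∪
        ↑(closedNbhd G {w ∈ L | f w = f v} ×ˢ {f v}) := by
    rintro ⟨u, j⟩ hp
    rcases mem_of_not_isUniversal_coBiclique hp with
      ⟨⟨rfl, hvL, hvT⟩, -⟩ | ⟨⟨-, rfl, -⟩, x, rfl, -, hxT⟩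
    · exact Or.inl ⟨rfl, hvL, hvT⟩
    · exact Or.inr (by simpa using hxT)
  have hcenter : {p : V × Fin g | p.1 = v ∧ v ∈ L ∧
      v ∈ closedNbhd G {w ∈ L | f w = p.2}}.ncard ≤ d + 1 := by
    by_cases hv : v ∈ L
    · calc _ ≤ #({v} ×ˢ (insert v (G.neighborFinset v)).image f) := by
            rw [← Set.ncard_coe_finset]
            refine Set.ncard_le_ncard ?_
            rintro ⟨u, j⟩ ⟨rfl, -, h⟩
            simpa using mem_image_of_mem_closedNbhd L f h
        _ ≤ G.degree v + 1 := by
            rw [card_product, card_singleton, one_mul, ← G.card_neighborFinset_eq_degree]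
            exact card_image_le.trans (card_insert_le _ _)
        _ ≤ d + 1 := by have := hdeg v hv; omega
    · simp [hv]
  calc _ ≤ _ := Set.ncard_le_ncard hsub
    _ ≤ _ := Set.ncard_union_le _ _
    _ ≤ d + 1 + c := by
        rw [Set.ncard_coe_finset, card_product, card_singleton, mul_one]
        exact add_le_add hcenter (hc _)

theorem localIntervalCover_blockBicliques :
    LocalIntervalCover G
      (fun u v => u ∈ L ∧ v ∈ L ∧ u ∉ closedNbhd G {w ∈ L | f w = f v}) (2 * g) := by
  let A : Fin g × Fin g → Set V := fun p =>
    {x | x ∈ L ∧ f x = p.1 ∧ x ∉ closedNbhd G {w ∈ L | f w = p.2}}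
  let B : Fin g × Fin g → Set V := fun p => {x | x ∈ L ∧ f x = p.2}
  refine ⟨Fin g × Fin g, inferInstance, fun p => coBiclique (A p) (B p),
    fun p => isIntervalGraph_coBiclique ?_, fun p => le_coBiclique ?_,
    fun u v huv hnadj ⟨hu, hv, hfar⟩ => ⟨(f u, f v), not_adj_coBiclique ⟨hu, rfl, hfar⟩ ⟨hv, rfl⟩⟩,
    fun v => ?_⟩
  · exact Set.disjoint_left.mpr fun x hxA hxB =>
      hxA.2.2 (mem_closedNbhd.mpr (Or.inl (mem_filter.mpr hxB)))
  · exact fun x hx y hy hxy =>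
      hx.2.2 (mem_closedNbhd.mpr (Or.inr ⟨y, mem_filter.mpr hy, hxy.symm⟩))
  have hsub : {p | ¬ IsUniversal (coBiclique (A p) (B p)) v} ⊆
      ↑(({f v} ×ˢ univ ∪ univ ×ˢ {f v}) : Finset (Fin g × Fin g)) := by
    rintro ⟨j, j'⟩ hp
    rcases mem_of_not_isUniversal_coBiclique hp with ⟨⟨-, rfl, -⟩, -⟩ | ⟨⟨-, rfl⟩, -⟩ <;> simp
  calc _ ≤ _ := Set.ncard_le_ncard hsub
    _ ≤ g + g := by
        rw [Set.ncard_coe_finset]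
        exact (card_union_le _ _).trans (by simp)
    _ = 2 * g := by ring

theorem localIntervalCover_blocks {d c : ℕ} (hdeg : ∀ v ∈ L, G.degree v ≤ d)
    (hc : ∀ j, #(closedNbhd G {w ∈ L | f w = j}) ≤ c) :
    LocalIntervalCover G (fun u v => u ∈ L ∧ v ∈ L) (d + 1 + c + 2 * g) :=
  ((localIntervalCover_blockStars L f hdeg hc).sup (localIntervalCover_blockBicliques L f)).mono
    (fun u v ⟨hu, hv⟩ => by
      by_cases h : u ∈ closedNbhd G {w ∈ L | f w = f v}
      exacts [Or.inl ⟨hu, hv, h⟩, Or.inr ⟨hu, hv, h⟩]) le_rfl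

end Blocks

theorem lbox_le {t : ℕ} (h : LocalBoxRep G t) : lbox G ≤ t :=
  Nat.sInf_le h

theorem two_le_ncard_edgeSet [Finite V] {u v : V} (huv : u ≠ v) (hnadj : ¬ G.Adj u v)
    (hu : u ∈ G.support) (hv : v ∈ G.support) : 2 ≤ G.edgeSet.ncard := by
  obtain ⟨u', hu'⟩ := G.mem_support.mp hu
  obtain ⟨v', hv'⟩ := G.mem_support.mp hv
  have hne : s(u, u') ≠ s(v, v') := by
    rw [Ne, Sym2.eq_iff]
    rintro (⟨rfl, -⟩ | ⟨rfl, rfl⟩)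
    exacts [huv rfl, hnadj hu']
  rw [← Set.ncard_pair hne]
  exact Set.ncard_le_ncard (Set.insert_subset hu' (Set.singleton_subset_iff.mpr hv'))

theorem localBoxRep_one_of_ncard_edgeSet_le_one [Finite V] (hm : G.edgeSet.ncard ≤ 1) :
    LocalBoxRep G 1 :=
  localIntervalCover_support.localBoxRep fun u v huv hnadj => by
    by_contra! h
    have := two_le_ncard_edgeSet huv hnadj h.1 h.2
    omega

theorem sum_degree_le_two_mul_ncard_edgeSet [Fintype V] (T : Finset V) :
    ∑ v ∈ T, G.degree v ≤ 2 * G.edgeSet.ncard := by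
  rw [← G.coe_edgeFinset, Set.ncard_coe_finset, ← G.sum_degrees_eq_twice_card_edges]
  exact sum_le_sum_of_subset (subset_univ _)

theorem localBoxRep_eleven_mul_sqrt_add_seven [Fintype V] {m : ℕ}
    (hm : G.edgeSet.ncard = m) :
    LocalBoxRep G (11 * Nat.sqrt m + 7) := by
  set s := Nat.sqrt m
  have hms : m < (s + 1) * (s + 1) := Nat.lt_succ_sqrt m
  let H : Finset V := {v | s < G.degree v}
  let L : Finset V := {v | 0 < G.degree v ∧ G.degree v ≤ s}
  have hH : #H ≤ 2 * s + 1 := by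
    have hsum : #H * (s + 1) ≤ ∑ v ∈ H, G.degree v := by
      simpa using card_nsmul_le_sum H (fun v => G.degree v) (s + 1) (by simp [H])
    have := hm ▸ sum_degree_le_two_mul_ncard_edgeSet H
    have : #H * (s + 1) < (2 * s + 2) * (s + 1) := by nlinarith
    have := Nat.lt_of_mul_lt_mul_right this
    omega
  have hL : ∑ v ∈ L, G.degree v < (2 * s + 2) * (s + 1) := by
    have := hm ▸ sum_degree_le_two_mul_ncard_edgeSet L
    nlinarith
  obtain ⟨f, hf⟩ := exists_partition_sum_le (fun v => G.degree v) (T := L)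
    (fun v hv => (mem_filter.mp hv).2.2) hL
  have hc : ∀ j, #(closedNbhd G {w ∈ L | f w = j}) ≤ 4 * s := fun j =>
    (card_closedNbhd_le fun v hv => (mem_filter.mp (mem_filter.mp hv).1).2.1).trans
      (by have := hf j; omega)
  have hcover := (localIntervalCover_support.sup (localIntervalCover_stars H)).sup
    (localIntervalCover_blocks L f (fun v hv => (mem_filter.mp hv).2.2) hc)
  refine (hcover.mono (fun _ _ h => h) (by omega)).localBoxRep fun u v _ _ => ?_
  by_cases hsupp : u ∈ G.support ∧ v ∈ G.support
  swap
  · exact Or.inl (Or.inl (by tauto))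
  by_cases hhigh : u ∈ H ∨ v ∈ H
  · exact Or.inl (Or.inr hhigh)
  simp only [H, L, not_or, mem_filter, mem_univ, true_and, not_lt,
    ← G.degree_pos_iff_mem_support] at hsupp hhigh ⊢
  exact Or.inr ⟨⟨hsupp.1, hhigh.1⟩, hsupp.2, hhigh.2⟩

theorem exists_iterate_logb_le_one (x : ℝ) : ∃ n, (Real.logb 2)^[n] x ≤ 1 := by
  obtain ⟨N, hN⟩ := pow_unbounded_of_one_lt x (by norm_num : (1 : ℝ) < 2)
  induction N generalizing x with
  | zero => exact ⟨0, by simpa using hN.le⟩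
  | succ N ih =>
    by_cases hx : x ≤ 1
    · exact ⟨0, hx⟩
    have hlog : Real.logb 2 x < 2 ^ N := by
      have hN' : (N + 1 : ℝ) ≤ 2 ^ N := by exact_mod_cast Nat.lt_two_pow_self
      rw [Real.logb_lt_iff_lt_rpow (by norm_num) (by linarith)]
      calc x < 2 ^ (N + 1) := hN
        _ = (2 : ℝ) ^ ((N + 1 : ℕ) : ℝ) := (Real.rpow_natCast 2 (N + 1)).symm
        _ ≤ (2 : ℝ) ^ ((2 : ℝ) ^ N) :=
          Real.rpow_le_rpow_of_exponent_le (by norm_num) (by push_cast; exact hN')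
    obtain ⟨n, hn⟩ := ih _ hlog
    exact ⟨n + 1, by rwa [Function.iterate_succ_apply]⟩

theorem logStar_one : logStar 1 = 0 :=
  Nat.sInf_eq_zero.mpr (Or.inl (by simp))

theorem one_le_logStar {x : ℝ} (hx : 1 < x) : 1 ≤ logStar x := by
  -- `sInf ∅ = 0`, so the set has to be shown nonempty.
  have hmem := Nat.sInf_mem (s := {n | (Real.logb 2)^[n] x ≤ 1}) (exists_iterate_logb_le_one x)
  refine Nat.one_le_iff_ne_zero.mpr fun h => ?_
  rw [logStar] at h
  simp only [h] at hmem
  exact hmem.not_gt hx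

end LocalBoxicity

open LocalBoxicity

/-- every graph with m ≥ 1 edges has
lbox(G) ≤ (2^(9·log* √m) + 2)·√m. -/
theorem stmt11 {V : Type} [Fintype V] (G : SimpleGraph V) (m : ℕ)
    (hm : G.edgeSet.ncard = m) (h1 : 1 ≤ m) :
    (lbox G : ℝ) ≤
      ((2 : ℝ) ^ (9 * logStar (Real.sqrt m)) + 2) * Real.sqrt m := by
  rcases h1.eq_or_lt with rfl | h2
  · have := lbox_le (localBoxRep_one_of_ncard_edgeSet_le_one hm.le)
    simp only [Nat.cast_one, Real.sqrt_one, logStar_one]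
    norm_num
    exact_mod_cast this.trans (by norm_num)
  have hlb : lbox G ≤ 11 * Nat.sqrt m + 7 := lbox_le (localBoxRep_eleven_mul_sqrt_add_seven hm)
  have hs : (1 : ℝ) ≤ Nat.sqrt m := by exact_mod_cast Nat.le_sqrt.mpr (by omega)
  have hsqrt : 1 < √(m : ℝ) := (Real.lt_sqrt zero_le_one).mpr (by norm_num; exact_mod_cast h2)
  have hpow : (2 : ℝ) ^ 9 ≤ 2 ^ (9 * logStar √(m : ℝ)) :=
    pow_le_pow_right₀ (by norm_num) (by have := one_le_logStar hsqrt; omega)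
  calc (lbox G : ℝ) ≤ 11 * Nat.sqrt m + 7 := by exact_mod_cast hlb
    _ ≤ 18 * √(m : ℝ) := by linarith [Real.nat_sqrt_le_real_sqrt (a := m)]
    _ ≤ _ := by nlinarith
end

section
/- For every finite simple graph G, lbox(G) ≤ prod_dim(G). -/
open Classical

/-!
Given a product representation `f : V → Fin k → ℕ` of `G`, take for every coordinate `i` and value
`a` the complete split graph whose independent set is the level set `{v | f v i = a}`. It is an
interval graph (distinct points for the level set, one common interval containing them for all other
vertices), the intersection of these graphs is `G`, and a vertex `v` is non-universal only in the
`k` graphs indexed by `(i, f v i)`. Product representations exist: one coordinate per non-edge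
`{a, b}`, identifying `a` with `b` and separating all other pairs, already suffices.
-/

section

variable {V : Type}

def IsProductRep {ι α : Type*} (G : SimpleGraph V) (f : V → ι → α) : Prop :=
  ∀ u v, u ≠ v → (G.Adj u v ↔ ∀ i, f u i ≠ f v i)

lemma IsProductRep.comp_injective {ι α β : Type*} {G : SimpleGraph V} {f : V → ι → α}
    (hf : IsProductRep G f) {g : α → β} (hg : Function.Injective g) :
    IsProductRep G (fun v i => g (f v i)) := by
  intro u v huv
  simp only [hg.ne_iff, hf u v huv]

lemma IsProductRep.reindex {ι κ α : Type*} {G : SimpleGraph V} {f : V → ι → α}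
    (hf : IsProductRep G f) (e : κ ≃ ι) : IsProductRep G (fun v j => f v (e j)) := by
  intro u v huv
  rw [hf u v huv, e.forall_congr_left]
  simp

noncomputable def nonEdgeMarking (G : SimpleGraph V) (w : V) : Option (Sym2 V) → Option V
  | some s => if w ∈ s ∧ s ∉ G.edgeSet then none else some w
  | none => some w

lemma isProductRep_nonEdgeMarking (G : SimpleGraph V) : IsProductRep G (nonEdgeMarking G) := by
  intro u v huv
  constructor
  · rintro hadj (_ | s)
    · simpa [nonEdgeMarking] using huv
    · have hs : ¬(u ∈ s ∧ v ∈ s ∧ s ∉ G.edgeSet) := by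
        rw [← and_assoc, Sym2.mem_and_mem_iff huv]
        rintro ⟨rfl, hs⟩
        exact hs hadj
      simp only [nonEdgeMarking]
      split_ifs <;> simp_all
  · intro h
    by_contra hadj
    refine h (some s(u, v)) ?_
    simp [nonEdgeMarking, hadj]

lemma setOf_isProductRep_fin_nonempty [Finite V] (G : SimpleGraph V) :
    {k | 0 < k ∧ ∃ f : V → Fin k → ℕ, IsProductRep G f}.Nonempty := by
  obtain ⟨g, hg⟩ := Countable.exists_injective_nat (Option V)
  exact ⟨_, Nat.card_pos, _,
    ((isProductRep_nonEdgeMarking G).comp_injective hg).reindex (Finite.equivFin _).symm⟩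

def completeSplitGraph (P : Set V) : SimpleGraph V where
  Adj u v := u ≠ v ∧ ¬(u ∈ P ∧ v ∈ P)
  symm := ⟨fun _ _ h => ⟨h.1.symm, fun h' => h.2 h'.symm⟩⟩
  loopless := ⟨fun _ h => h.1 rfl⟩

lemma isUniversal_completeSplitGraph {P : Set V} {v : V} (hv : v ∉ P) :
    IsUniversal (completeSplitGraph P) v :=
  fun _ hu => ⟨hu.symm, fun h => hv h.1⟩

/-- Vertices of `P` become distinct points of `(-π/2, π/2)`, the others the whole interval
`[-π/2, π/2]`. -/
lemma isIntervalGraph_completeSplitGraph [Countable V] (P : Set V) :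
    IsIntervalGraph (completeSplitGraph P) := by
  obtain ⟨n, hn⟩ := Countable.exists_injective_nat V
  set c : V → ℝ := fun w => Real.arctan (n w)
  have hc : Function.Injective c := Real.arctan_injective.comp (Nat.cast_injective.comp hn)
  have hc_mem (w : V) : c w ∈ Set.Icc (-(Real.pi / 2)) (Real.pi / 2) :=
    Set.Ioo_subset_Icc_self (Real.arctan_mem_Ioo _)
  refine ⟨fun w => if w ∈ P then c w else -(Real.pi / 2),
    fun w => if w ∈ P then c w else Real.pi / 2, fun u v huv => ?_⟩
  show u ≠ v ∧ ¬(u ∈ P ∧ v ∈ P) ↔ _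
  by_cases hu : u ∈ P <;> by_cases hv : v ∈ P <;> simp only [hu, hv, if_true, if_false]
  · simp [hc.ne huv, huv]
  · simp [huv, hc_mem u]
  · simp [huv, hc_mem v]
  · simpa [huv] using Real.pi_div_two_pos.le

lemma localBoxRep_of_finite_family {ι : Type*} [Finite ι] {G : SimpleGraph V}
    (I : ι → SimpleGraph V) (hI : ∀ i, IsIntervalGraph (I i))
    (hG : ∀ u v, u ≠ v → (G.Adj u v ↔ ∀ i, (I i).Adj u v)) {t : ℕ}
    (ht : ∀ v, {i | ¬IsUniversal (I i) v}.ncard ≤ t) : LocalBoxRep G t := by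
  set e := (Finite.equivFin ι).symm
  refine ⟨_, fun j => I (e j), fun j => hI (e j), fun u v huv => ?_, fun v => ?_⟩
  · rw [hG u v huv, e.forall_congr_left]
    simp
  · exact (Set.ncard_preimage_of_injective_subset_range e.injective (by simp)).trans_le (ht v)

lemma localBoxRep_of_isProductRep [Finite V] {κ α : Type*} [Finite κ]
    {G : SimpleGraph V} {f : V → κ → α} (hf : IsProductRep G f) : LocalBoxRep G (Nat.card κ) := by
  let value (v : V) (i : κ) : Set.range (Function.uncurry f) := ⟨f v i, (v, i), rfl⟩
  refine localBoxRep_of_finite_family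
    (fun x : κ × Set.range (Function.uncurry f) => completeSplitGraph {v | f v x.1 = x.2})
    (fun _ => isIntervalGraph_completeSplitGraph _) (fun u v huv => ?_) (fun v => ?_)
  · rw [hf u v huv]
    constructor
    · exact fun h x => ⟨huv, fun ⟨hu, hv⟩ => h x.1 (hu.trans hv.symm)⟩
    · exact fun h i hi => (h (i, value u i)).2 ⟨rfl, hi.symm⟩
  · have hsub : {x | ¬IsUniversal (completeSplitGraph {v | f v x.1 = x.2}) v} ⊆
        Set.range fun i => (i, value v i) := by
      rintro ⟨i, a⟩ hx
      by_contra hne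
      refine hx (isUniversal_completeSplitGraph fun (h : f v i = a) => hne ⟨i, ?_⟩)
      simp [value, h]
    calc _ ≤ _ := Set.ncard_le_ncard hsub
      _ = Nat.card κ :=
        Set.ncard_range_of_injective fun i j h => congrArg Prod.fst h

end

/-- for every finite simple graph G, lbox(G) ≤ prod_dim(G). -/
theorem stmt14 {V : Type} [Fintype V] (G : SimpleGraph V) :
    lbox G ≤ prodDim G := by
  obtain ⟨-, f, hf⟩ := Nat.sInf_mem (setOf_isProductRep_fin_nonempty G)
  have hbox := localBoxRep_of_isProductRep hf
  rw [Nat.card_fin] at hbox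
  exact Nat.sInf_le hbox
end

section
/- For every finite poset P whose comparability graph G_P has at least one edge, ldim(P) ≤ 2 · prod_dim(G_P) + 1. -/
open Classical

/-!
Let `f : P → ℕ^k` be a product representation of `G_P`. For each coordinate `i`, the fibres of
`x ↦ f x i` are antichains, because comparable elements differ in every coordinate, and two
incomparable elements lie in a common fibre of some coordinate. Each fibre, listed once along a
fixed linear extension of `P` and once against it, together with that linear extension itself,
gives a local realizer in which every element occurs in `2k + 1` ple's.
-/

namespace List

variable {α : Type*} [DecidableEq α]

theorem idxOf_lt_idxOf_of_pairwise {r : α → α → Prop} {l : List α} (hl : l.Pairwise r)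
    {x y : α} (hx : x ∈ l) (hy : y ∈ l) (hxy : x ≠ y) (hyx : ¬ r y x) :
    l.idxOf x < l.idxOf y := by
  refine lt_of_le_of_ne (not_lt.1 fun hlt => hyx ?_) (mt (idxOf_inj hx).1 hxy)
  have hxl := idxOf_lt_length_iff.2 hx
  have hyl := idxOf_lt_length_iff.2 hy
  simpa only [getElem_idxOf] using List.pairwise_iff_getElem.1 hl _ _ hyl hxl hlt

end List

section PartialLinearExtensions

variable {α : Type} [DecidableEq α]

theorem below_of_pairwise {r : α → α → Prop} {l : List α} (hl : l.Pairwise r)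
    {x y : α} (hx : x ∈ l) (hy : y ∈ l) (hxy : x ≠ y) (hyx : ¬ r y x) : Below l x y :=
  ⟨hx, hy, l.idxOf_lt_idxOf_of_pairwise hl hx hy hxy hyx⟩

variable [PartialOrder α]

theorem isPLE_of_pairwise {s : α → α → Prop} [Std.Antisymm s] (hle : ∀ a b : α, a ≤ b → s a b)
    {l : List α} (hl : l.Pairwise s) (hn : l.Nodup) : IsPLE l := by
  refine ⟨hn, fun x hx y hy hxy => ?_⟩
  rcases eq_or_ne x y with rfl | hne
  · rfl
  · exact (l.idxOf_lt_idxOf_of_pairwise hl hx hy hne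
      fun hyx => hne (Std.Antisymm.antisymm _ _ (hle x y hxy) hyx)).le

theorem isPLE_of_forall_le_imp_eq {l : List α} (hn : l.Nodup)
    (h : ∀ x ∈ l, ∀ y ∈ l, x ≤ y → x = y) : IsPLE l :=
  ⟨hn, fun x hx y hy hxy => (h x hx y hy hxy) ▸ le_rfl⟩

theorem ldim_le_of_family {ι : Type*} [Finite ι] (L : ι → List α) {t : ℕ}
    (hple : ∀ i, IsPLE (L i))
    (hlt : ∀ x y : α, x < y → ∃ i, Below (L i) x y)
    (hinc : ∀ x y : α, ¬ x ≤ y → ¬ y ≤ x → (∃ i, Below (L i) x y) ∧ (∃ i, Below (L i) y x))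
    (hfreq : ∀ x : α, {i : ι | x ∈ L i}.ncard ≤ t) :
    ldim α ≤ t := by
  let e := Finite.equivFin ι
  refine Nat.sInf_le ⟨Nat.card ι, L ∘ e.symm, ⟨fun j => hple _, fun x y hxy => ?_,
    fun x y hxy hyx => ?_⟩, fun x => ?_⟩
  · obtain ⟨i, hi⟩ := hlt x y hxy
    exact ⟨e i, by simpa using hi⟩
  · obtain ⟨⟨i, hi⟩, ⟨i', hi'⟩⟩ := hinc x y hxy hyx
    exact ⟨⟨e i, by simpa using hi⟩, ⟨e i', by simpa using hi'⟩⟩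
  · have : {j | x ∈ (L ∘ e.symm) j} = e '' {i | x ∈ L i} := by
      ext j
      simp [Set.mem_image_equiv]
    rw [this, Set.ncard_image_of_injective _ e.injective]
    exact hfreq x

end PartialLinearExtensions

section FiberRealizer

variable {α β : Type} {k : ℕ}

def fiber (f : α → Fin k → β) (i : Fin k) (x : α) : Set α := {v | f v i = f x i}

theorem fiber_eq_fiber_iff {f : α → Fin k → β} {i : Fin k} {x y : α} :
    fiber f i x = fiber f i y ↔ f x i = f y i :=
  ⟨fun h => show x ∈ fiber f i y from h ▸ rfl, fun h => by simp [fiber, h]⟩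

variable [Fintype α] (s : α → α → Prop) [DecidableRel s] [IsLinearOrder α s]

noncomputable def fiberList (f : α → Fin k → β) (i : Fin k) (S : Set α) : List α :=
  (Finset.univ.sort s).filter (fun u => fiber f i u = S)

/-- Fibres are indexed by the set they are, so that each element lies in exactly one fibre
list per coordinate and orientation; the lists at all other sets are empty. -/
noncomputable def fiberRealizer (f : α → Fin k → β) : Option (Fin k × Bool × Set α) → List α
  | none => Finset.univ.sort s
  | some (i, true, S) => fiberList s f i S
  | some (i, false, S) => (fiberList s f i S).reverse

variable {s} {f : α → Fin k → β}

theorem mem_fiberList {i : Fin k} {S : Set α} {x : α} :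
    x ∈ fiberList s f i S ↔ fiber f i x = S := by
  simp [fiberList]

theorem fiberList_nodup (i : Fin k) (S : Set α) : (fiberList s f i S).Nodup :=
  (Finset.sort_nodup _ _).filter _

theorem fiberList_pairwise (i : Fin k) (S : Set α) : (fiberList s f i S).Pairwise s :=
  (Finset.pairwise_sort _ _).filter _

theorem ncard_setOf_mem_fiberRealizer_le (x : α) :
    {j | x ∈ fiberRealizer s f j}.ncard ≤ 2 * k + 1 := by
  set g : Fin k × Bool → Option (Fin k × Bool × Set α) := fun p => some (p.1, p.2, fiber f p.1 x)
  have hg : g.Injective := fun p q h => by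
    simp only [g, Option.some.injEq, Prod.mk.injEq] at h
    exact Prod.ext h.1 h.2.1
  have hsub : {j | x ∈ fiberRealizer s f j} ⊆ insert none (Set.range g) := by
    rintro (_ | ⟨i, b, S⟩) hx
    · exact Set.mem_insert _ _
    · refine Or.inr ⟨(i, b), ?_⟩
      cases b <;> simp_all [g, fiberRealizer, mem_fiberList]
  calc {j | x ∈ fiberRealizer s f j}.ncard
      ≤ (insert none (Set.range g)).ncard := Set.ncard_le_ncard hsub
    _ ≤ (Set.range g).ncard + 1 := Set.ncard_insert_le _ _
    _ = 2 * k + 1 := by simp [Set.ncard_range_of_injective hg, mul_comm]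

variable [DecidableEq α]

theorem below_fiberRealizer_of_rel {i : Fin k} {x y : α} (hxy : f x i = f y i) (hne : x ≠ y)
    (hs : s x y) : Below (fiberRealizer s f (some (i, true, fiber f i x))) x y ∧
      Below (fiberRealizer s f (some (i, false, fiber f i x))) y x := by
  have hx : x ∈ fiberList s f i (fiber f i x) := mem_fiberList.2 rfl
  have hy : y ∈ fiberList s f i (fiber f i x) := mem_fiberList.2 (fiber_eq_fiber_iff.2 hxy.symm)
  have hsyx : ¬ s y x := fun hyx => hne (antisymm hs hyx)
  exact ⟨below_of_pairwise (fiberList_pairwise i _) hx hy hne hsyx,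
    below_of_pairwise (List.pairwise_reverse.2 (fiberList_pairwise i _)) (List.mem_reverse.2 hy)
      (List.mem_reverse.2 hx) hne.symm hsyx⟩

variable [PartialOrder α]

theorem isPLE_fiberRealizer (hle : ∀ a b : α, a ≤ b → s a b)
    (hanti : ∀ i x y, f x i = f y i → x ≤ y → x = y) (j : Option (Fin k × Bool × Set α)) :
    IsPLE (fiberRealizer s f j) := by
  rcases j with _ | ⟨i, b, S⟩
  · exact isPLE_of_pairwise hle (Finset.pairwise_sort _ _) (Finset.sort_nodup _ _)
  have hfib : ∀ x ∈ fiberList s f i S, ∀ y ∈ fiberList s f i S, x ≤ y → x = y :=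
    fun x hx y hy => hanti i x y (fiber_eq_fiber_iff.1 ((mem_fiberList.1 hx).trans
      (mem_fiberList.1 hy).symm))
  cases b
  · show IsPLE (fiberList s f i S).reverse
    exact isPLE_of_forall_le_imp_eq (List.nodup_reverse.2 (fiberList_nodup i S))
      (by simpa only [List.mem_reverse] using hfib)
  · exact isPLE_of_forall_le_imp_eq (fiberList_nodup i S) hfib

theorem below_fiberRealizer_none (hle : ∀ a b : α, a ≤ b → s a b) {x y : α} (hxy : x < y) :
    Below (fiberRealizer s f none) x y :=
  below_of_pairwise (Finset.pairwise_sort _ _) (by simp) (by simp)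
    hxy.ne fun hyx => hxy.ne (antisymm (hle x y hxy.le) hyx)

end FiberRealizer

theorem ldim_le_of_fiber_antichains {α β : Type} [Fintype α] [DecidableEq α] [PartialOrder α]
    {k : ℕ} (f : α → Fin k → β) (hanti : ∀ i x y, f x i = f y i → x ≤ y → x = y)
    (hcover : ∀ x y : α, ¬ x ≤ y → ¬ y ≤ x → ∃ i, f x i = f y i) :
    ldim α ≤ 2 * k + 1 := by
  obtain ⟨s, _, hle⟩ := extend_partialOrder ((· ≤ ·) : α → α → Prop)
  refine ldim_le_of_family (fiberRealizer s f) (isPLE_fiberRealizer hle hanti)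
    (fun x y hxy => ⟨none, below_fiberRealizer_none hle hxy⟩) (fun x y hxy hyx => ?_)
    ncard_setOf_mem_fiberRealizer_le
  obtain ⟨i, hi⟩ := hcover x y hxy hyx
  have hne : x ≠ y := fun h => hxy h.le
  rcases total_of s x y with h | h
  · obtain ⟨hxy', hyx'⟩ := below_fiberRealizer_of_rel hi hne h
    exact ⟨⟨_, hxy'⟩, ⟨_, hyx'⟩⟩
  · obtain ⟨hyx', hxy'⟩ := below_fiberRealizer_of_rel hi.symm hne.symm h
    exact ⟨⟨_, hxy'⟩, ⟨_, hyx'⟩⟩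

section ProductRepresentation

variable {V ι β : Type}

def IsProdRep (G : SimpleGraph V) (f : V → ι → β) : Prop :=
  ∀ u v : V, u ≠ v → (G.Adj u v ↔ ∀ i, f u i ≠ f v i)

theorem IsProdRep.comp_equiv {ι' : Type} {G : SimpleGraph V} {f : V → ι → β}
    (hf : IsProdRep G f) (c : ι' ≃ ι) : IsProdRep G fun v => f v ∘ c :=
  fun u v huv => (hf u v huv).trans c.forall_congr_right.symm

/-- Coordinate `some z` sends both ends of a non-edge `z` to `0` and separates all other
vertices; coordinate `none` only makes the number of coordinates positive. -/
noncomputable def nonEdgeRep (G : SimpleGraph V) (e : V → ℕ) (x : V) (o : Option (Sym2 V)) : ℕ :=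
  if ∃ z ∈ o, x ∈ z ∧ z ∉ G.edgeSet then 0 else e x + 1

theorem nonEdgeRep_eq_iff {G : SimpleGraph V} {e : V → ℕ} (he : e.Injective) {u v : V}
    (huv : u ≠ v) (o : Option (Sym2 V)) :
    nonEdgeRep G e u o = nonEdgeRep G e v o ↔ o = some s(u, v) ∧ ¬ G.Adj u v := by
  have hends : (∃ z ∈ o, u ∈ z ∧ z ∉ G.edgeSet) ∧ (∃ z ∈ o, v ∈ z ∧ z ∉ G.edgeSet) ↔
      o = some s(u, v) ∧ ¬ G.Adj u v := by
    rcases o with _ | z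
    · simp
    · simp only [Option.mem_def, Option.some.injEq, exists_eq_left']
      constructor
      · rintro ⟨⟨hu, hz⟩, hv, -⟩
        obtain rfl := (Sym2.mem_and_mem_iff huv).1 ⟨hu, hv⟩
        exact ⟨rfl, hz⟩
      · rintro ⟨rfl, hadj⟩
        exact ⟨⟨Sym2.mem_mk_left u v, hadj⟩, Sym2.mem_mk_right u v, hadj⟩
  rw [nonEdgeRep, nonEdgeRep]
  split_ifs with hu hv hv
  · exact iff_of_true rfl (hends.1 ⟨hu, hv⟩)
  · exact iff_of_false not_false fun h => hv (hends.2 h).2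
  · exact iff_of_false not_false fun h => hu (hends.2 h).1
  · exact iff_of_false (by simpa [he.eq_iff] using huv) fun h => hu (hends.2 h).1

theorem isProdRep_nonEdgeRep (G : SimpleGraph V) {e : V → ℕ} (he : e.Injective) :
    IsProdRep G (nonEdgeRep G e) := by
  intro u v huv
  simp only [ne_eq, nonEdgeRep_eq_iff he huv]
  refine ⟨fun h o ho => ho.2 h, fun h => ?_⟩
  by_contra hadj
  exact h _ ⟨rfl, hadj⟩

theorem exists_isProdRep_prodDim [Finite V] (G : SimpleGraph V) :
    ∃ f : V → Fin (prodDim G) → ℕ, IsProdRep G f := by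
  obtain ⟨e, he⟩ := exists_injective_nat V
  have hmem : Nat.card (Option (Sym2 V)) ∈ {k : ℕ | 0 < k ∧ ∃ f : V → Fin k → ℕ, IsProdRep G f} :=
    ⟨Nat.card_pos, _, (isProdRep_nonEdgeRep G he).comp_equiv (Finite.equivFin _).symm⟩
  exact (Nat.sInf_mem ⟨_, hmem⟩).2

theorem IsProdRep.eq_of_le {α : Type} [PartialOrder α] {f : α → ι → β}
    (hf : IsProdRep (compGraph α) f) {i : ι} {x y : α} (hxy : f x i = f y i) (hle : x ≤ y) :
    x = y := by
  by_contra hne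
  exact (hf x y hne).1 ⟨hne, Or.inl hle⟩ i hxy

theorem IsProdRep.exists_eq_of_incomparable {α : Type} [PartialOrder α] {f : α → ι → β}
    (hf : IsProdRep (compGraph α) f) {x y : α} (hxy : ¬ x ≤ y) (hyx : ¬ y ≤ x) :
    ∃ i, f x i = f y i := by
  by_contra! h
  exact ((hf x y fun he => hxy he.le).2 h).2.elim hxy hyx

end ProductRepresentation

theorem stmt15_general {α : Type} [Fintype α] [DecidableEq α] [PartialOrder α] :
    ldim α ≤ 2 * prodDim (compGraph α) + 1 := by
  obtain ⟨f, hf⟩ := exists_isProdRep_prodDim (compGraph α)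
  exact ldim_le_of_fiber_antichains f (fun _ _ _ => hf.eq_of_le)
    (fun _ _ => hf.exists_eq_of_incomparable)

/-- for every finite poset whose comparability graph has at least
one edge, ldim(P) ≤ 2·prod_dim(G_P) + 1. -/
theorem stmt15 {α : Type} [Fintype α] [DecidableEq α] [PartialOrder α]
    (h : ∃ x y : α, (compGraph α).Adj x y) :
    ldim α ≤ 2 * prodDim (compGraph α) + 1 :=
  stmt15_general
end

section
/- For every positive integer n, the Roberts graph R_n (the graph obtained from the complete graph on 2n vertices by removing a perfect matching) has local boxicity at most 1. -/
open Classical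

/-- The Roberts graph: vertices a_i = (i, false), b_i = (i, true); two distinct
vertices are adjacent iff they do not form a pair {a_i, b_i}, i.e. iff their
indices differ. -/
def RobertsGraph (n : ℕ) : SimpleGraph (Fin n × Bool) where
  Adj u v := u.1 ≠ v.1
  symm := ⟨fun _ _ h => h.symm⟩
  loopless := ⟨fun _ h => h rfl⟩

/-!
The complete graph minus the single edge `aᵢbᵢ` is an interval graph (give `aᵢ` the interval
`[0, 0]`, `bᵢ` the interval `[1, 1]` and every other vertex `[0, 1]`), and only `aᵢ` and `bᵢ` fail
to be universal in it. The intersection of these `n` graphs is `Rₙ`, and since the removed edges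
form a matching, every vertex is non-universal in exactly one of them.
-/

open SimpleGraph (edge edge_adj sdiff_adj top_adj iInf_adj)

theorem lbox_le_of_localBoxRep {V : Type} {G : SimpleGraph V} {t : ℕ} (h : LocalBoxRep G t) :
    lbox G ≤ t :=
  Nat.sInf_le h

theorem isIntervalGraph_top_sdiff_edge {V : Type} {x y : V} (hxy : x ≠ y) :
    IsIntervalGraph (⊤ \ edge x y) := by
  refine ⟨fun v => if v = y then 1 else 0, fun v => if v = x then 0 else 1, fun u v huv => ?_⟩
  simp only [sdiff_adj, top_adj, edge_adj, Set.Icc_inter_Icc, Set.nonempty_Icc]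
  split_ifs <;> simp_all

theorem isUniversal_top_sdiff_edge {V : Type} {x y v : V} (hx : v ≠ x) (hy : v ≠ y) :
    IsUniversal (⊤ \ edge x y) v := by
  intro u hu
  simp [edge_adj, hx, hy, hu.symm]

theorem localBoxRep_one_of_eq_iInf_top_sdiff_edge {V : Type} {G : SimpleGraph V} {k : ℕ}
    (x y : Fin k → V) (hxy : ∀ i, x i ≠ y i) (hG : G = ⨅ i, ⊤ \ edge (x i) (y i))
    (hmatching : ∀ v, {i | v = x i ∨ v = y i}.Subsingleton) :
    LocalBoxRep G 1 := by
  refine ⟨k, fun i => ⊤ \ edge (x i) (y i), fun i => isIntervalGraph_top_sdiff_edge (hxy i),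
    fun u v huv => by simp [hG, iInf_adj, huv], fun v => ?_⟩
  have hsub : {i | ¬ IsUniversal (⊤ \ edge (x i) (y i)) v} ⊆ {i | v = x i ∨ v = y i} := by
    intro i hi
    by_contra h
    exact hi (isUniversal_top_sdiff_edge (fun hx => h (.inl hx)) (fun hy => h (.inr hy)))
  exact Set.ncard_le_one_iff_subsingleton.2 ((hmatching v).anti hsub)

theorem robertsGraph_eq_iInf_top_sdiff_edge (n : ℕ) :
    RobertsGraph n = ⨅ i, ⊤ \ edge (i, false) (i, true) := by
  ext ⟨i, a⟩ ⟨j, b⟩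
  simp only [RobertsGraph, iInf_adj, sdiff_adj, top_adj, edge_adj, Prod.mk.injEq]
  cases a <;> cases b <;> grind

theorem stmt16_general (n : ℕ) : lbox (RobertsGraph n) ≤ 1 := by
  have hmatching : ∀ v : Fin n × Bool, {i | v = (i, false) ∨ v = (i, true)}.Subsingleton := by
    rintro v i (rfl | rfl) j hj <;> simpa [eq_comm] using hj
  exact lbox_le_of_localBoxRep <|
    localBoxRep_one_of_eq_iInf_top_sdiff_edge _ _ (fun i => by simp)
      (robertsGraph_eq_iInf_top_sdiff_edge n) hmatching

/-- the Roberts graph has local boxicity at most 1. -/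
theorem stmt16 (n : ℕ) (hn : 1 ≤ n) : lbox (RobertsGraph n) ≤ 1 :=
  stmt16_general n
end
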